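/- arXiv:2307.05043 — 10 statements merged into one kernel-verified Lean document; each statement's English description precedes it below -/
import Mathlib

section
/- The proof system S_AS of assertoric syllogistic is sound and strongly complete with respect to its semantics: for every set Σ of L_AS-formulas and every L_AS-formula φ, Σ ⊢_{S_AS} φ if and only if Σ ⊨_{AS} φ. -/
/-- Formulas of the language L_AS: `All A are B`, `All A are ¬B`, `Some A is B`,
`Some A is ¬B`, where A, B are predicates of U. -/
inductive AsForm (U : Type) : Type
  | allP : U → U → AsForm U   -- All A are B
  | allN : U → U → AsForm U   -- All A are ¬B
  | somP : U → U → AsForm U   -- Some A is B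
  | somN : U → U → AsForm U   -- Some A is ¬B

/-- The (defined) negation of an L_AS formula. -/
def AsForm.negf {U : Type} : AsForm U → AsForm U
  | .allP A B => .somN A B
  | .allN A B => .somP A B
  | .somP A B => .allN A B
  | .somN A B => .allP A B

/-- Derivability in the proof system S_AS: axiom All A are A, rules Conversion,
Barbara-Celarent, Existence, and RAA. -/
inductive AsDer {U : Type} : Set (AsForm U) → AsForm U → Prop
  | prem {Γ φ} : φ ∈ Γ → AsDer Γ φ
  | allSelf {Γ} (A : U) : AsDer Γ (.allP A A)
  | conv {Γ A B} : AsDer Γ (.somP A B) → AsDer Γ (.somP B A)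
  | barbara {Γ A B C} : AsDer Γ (.allP A B) → AsDer Γ (.allP B C) → AsDer Γ (.allP A C)
  | celarent {Γ A B C} : AsDer Γ (.allP A B) → AsDer Γ (.allN B C) → AsDer Γ (.allN A C)
  | existP {Γ A B} : AsDer Γ (.somP A B) → AsDer Γ (.somP A A)
  | existN {Γ A B} : AsDer Γ (.somN A B) → AsDer Γ (.somP A A)
  | raa {Γ φ ψ} : AsDer (insert φ.negf Γ) ψ → AsDer (insert φ.negf Γ) ψ.negf →
      AsDer Γ φ

/-- A model of L_AS: a nonempty domain together with an interpretation of the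
predicates as subsets of the domain. -/
structure AsModel (U : Type) where
  D : Type
  dNonempty : Nonempty D
  val : U → Set D

/-- Satisfaction of L_AS formulas. -/
def AsModel.sat {U : Type} (M : AsModel U) : AsForm U → Prop
  | .allP A B => M.val A ⊆ M.val B
  | .allN A B => M.val A ∩ M.val B = ∅
  | .somP A B => (M.val A ∩ M.val B).Nonempty
  | .somN A B => ¬ M.val A ⊆ M.val B

/-- A model satisfies a set of formulas. -/
def AsModel.satSet {U : Type} (M : AsModel U) (Γ : Set (AsForm U)) : Prop :=
  ∀ φ ∈ Γ, M.sat φ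

/-- Weakening: derivability is monotone in the premise set. -/
theorem AsDer.mono {U : Type} {Γ Γ' : Set (AsForm U)} {ψ : AsForm U}
    (h : AsDer Γ ψ) (hs : Γ ⊆ Γ') : AsDer Γ' ψ := by
  induction h generalizing Γ' with
  | prem hφ => exact .prem (hs hφ)
  | allSelf A => exact .allSelf A
  | conv _ ih => exact .conv (ih hs)
  | barbara _ _ ih1 ih2 => exact .barbara (ih1 hs) (ih2 hs)
  | celarent _ _ ih1 ih2 => exact .celarent (ih1 hs) (ih2 hs)
  | existP _ ih => exact .existP (ih hs)
  | existN _ ih => exact .existN (ih hs)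
  | raa _ _ ih1 ih2 =>
      exact .raa (ih1 (Set.insert_subset_insert hs)) (ih2 (Set.insert_subset_insert hs))

/-- Derived rule: `All A are ¬B` is symmetric. -/
theorem AsDer.allN_symm {U : Type} {Γ : Set (AsForm U)} {A B : U}
    (h : AsDer Γ (.allN A B)) : AsDer Γ (.allN B A) :=
  AsDer.raa (ψ := .allN A B)
    (h.mono (Set.subset_insert _ _))
    (.conv (.prem (Set.mem_insert _ _)))

/-- Derived rule Darii: from `All X are B` and `Some A is X`, infer `Some A is B`. -/
theorem AsDer.darii {U : Type} {Γ : Set (AsForm U)} {X A B : U}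
    (hall : AsDer Γ (.allP X B)) (hsom : AsDer Γ (.somP A X)) :
    AsDer Γ (.somP A B) := by
  refine AsDer.raa (ψ := .somP A X) (hsom.mono (Set.subset_insert _ _)) ?_
  -- need : AsDer (insert (.allN A B) Γ) (.allN A X)
  have hAB : AsDer (insert (AsForm.allN A B) Γ) (.allN A B) := .prem (Set.mem_insert _ _)
  have hBA : AsDer (insert (AsForm.allN A B) Γ) (.allN B A) := hAB.allN_symm
  have hXA : AsDer (insert (AsForm.allN A B) Γ) (.allN X A) :=
    .celarent (hall.mono (Set.subset_insert _ _)) hBA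
  exact hXA.allN_symm

/-- Satisfying the negation of a formula is the same as not satisfying it. -/
theorem AsModel.sat_negf {U : Type} (M : AsModel U) (ψ : AsForm U) :
    M.sat ψ.negf ↔ ¬ M.sat ψ := by
  cases ψ with
  | allP A B => exact Iff.rfl
  | allN A B => exact Set.nonempty_iff_ne_empty.trans (by simp [AsModel.sat])
  | somP A B => exact (Set.not_nonempty_iff_eq_empty.symm : _)
  | somN A B => simp only [AsModel.sat]; exact not_not.symm

/-- Soundness. -/
theorem AsDer.sound {U : Type} {Γ : Set (AsForm U)} {ψ : AsForm U}
    (h : AsDer Γ ψ) : ∀ M : AsModel U, M.satSet Γ → M.sat ψ := by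
  induction h with
  | prem hφ => exact fun M hM => hM _ hφ
  | allSelf A => exact fun M _ => subset_rfl
  | conv _ ih =>
      intro M hM
      obtain ⟨x, hx⟩ := ih M hM
      exact ⟨x, hx.2, hx.1⟩
  | barbara _ _ ih1 ih2 => exact fun M hM => (ih1 M hM).trans (ih2 M hM)
  | celarent _ _ ih1 ih2 =>
      intro M hM
      have h1 := ih1 M hM; have h2 := ih2 M hM
      apply Set.eq_empty_iff_forall_notMem.mpr
      intro x hx
      exact Set.eq_empty_iff_forall_notMem.mp h2 x ⟨h1 hx.1, hx.2⟩
  | existP _ ih =>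
      intro M hM
      obtain ⟨x, hx⟩ := ih M hM
      exact ⟨x, hx.1, hx.1⟩
  | existN _ ihN =>
      intro M hM
      obtain ⟨x, hx, -⟩ := Set.not_subset.mp (ihN M hM)
      exact ⟨x, hx, hx⟩
  | @raa Γ' φ' ψ' _ _ ih1 ih2 =>
      intro M hM
      by_contra hφ
      have hM' : M.satSet (insert φ'.negf Γ') := by
        intro γ hγ
        rcases hγ with rfl | hγ
        · exact (M.sat_negf _).mpr hφ
        · exact hM _ hγ
      exact (M.sat_negf _).mp (ih2 M hM') (ih1 M hM')

/-- The canonical model of a premise set. -/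
noncomputable def canonM {U : Type} (Δ : Set (AsForm U)) : AsModel U where
  D := Option {p : U × U // AsDer Δ (.somP p.1 p.2)}
  dNonempty := ⟨none⟩
  val C := {x | ∃ (X Y : U) (h : AsDer Δ (.somP X Y)),
    x = some ⟨(X, Y), h⟩ ∧ (AsDer Δ (.allP X C) ∨ AsDer Δ (.allP Y C))}

/-- Truth lemma: a consistent premise set's canonical model satisfies everything derivable. -/
theorem canonM_sat {U : Type} {Δ : Set (AsForm U)}
    (hcon : ∀ ψ : AsForm U, AsDer Δ ψ → AsDer Δ ψ.negf → False)
    {ψ : AsForm U} (h : AsDer Δ ψ) : (canonM Δ).sat ψ := by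
  cases ψ with
  | allP A B =>
      intro x hx
      obtain ⟨X, Y, hs, rfl, hd⟩ := hx
      exact ⟨X, Y, hs, rfl, hd.imp (fun h' => .barbara h' h) (fun h' => .barbara h' h)⟩
  | somP A B =>
      exact ⟨some ⟨(A, B), h⟩, ⟨A, B, h, rfl, Or.inl (.allSelf A)⟩,
        ⟨A, B, h, rfl, Or.inr (.allSelf B)⟩⟩
  | allN A B =>
      apply Set.eq_empty_iff_forall_notMem.mpr
      rintro x ⟨hA, hB⟩
      obtain ⟨X, Y, hs, rfl, hdA⟩ := hA
      obtain ⟨X', Y', hs', heq, hdB⟩ := hB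
      simp only [Option.some.injEq, Subtype.mk.injEq, Prod.mk.injEq] at heq
      obtain ⟨rfl, rfl⟩ := heq
      have hsom : AsDer Δ (.somP A B) := by
        rcases hdA with hdA | hdA <;> rcases hdB with hdB | hdB
        · exact AsDer.darii hdB (.conv (AsDer.darii hdA (.existP hs)))
        · exact .conv (AsDer.darii hdA (.conv (AsDer.darii hdB hs)))
        · exact .conv (AsDer.darii hdA (.conv (AsDer.darii hdB (.conv hs))))
        · exact AsDer.darii hdB (.conv (AsDer.darii hdA (.existP (.conv hs))))
      exact hcon _ hsom h
  | somN A B =>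
      intro hsub
      have hAA : AsDer Δ (.somP A A) := .existN h
      have hmem : (some ⟨(A, A), hAA⟩ : (canonM Δ).D) ∈ (canonM Δ).val A :=
        ⟨A, A, hAA, rfl, Or.inl (.allSelf A)⟩
      obtain ⟨X, Y, hs, heq, hd⟩ := hsub hmem
      simp only [Option.some.injEq, Subtype.mk.injEq, Prod.mk.injEq] at heq
      obtain ⟨rfl, rfl⟩ := heq
      exact hcon _ h (by rcases hd with hd | hd <;> exact hd)

/-- S_AS is sound and strongly complete: Σ ⊢_{S_AS} φ iff Σ ⊨_{AS} φ. -/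
theorem sas_sound_and_strongly_complete (U : Type) [Countable U]
    (Γ : Set (AsForm U)) (φ : AsForm U) :
    AsDer Γ φ ↔ (∀ M : AsModel U, M.satSet Γ → M.sat φ) := by
  constructor
  · exact fun h => h.sound
  · intro hval
    by_contra hder
    set Δ : Set (AsForm U) := insert φ.negf Γ with hΔ
    have hcon : ∀ ψ : AsForm U, AsDer Δ ψ → AsDer Δ ψ.negf → False := by
      intro ψ h1 h2
      exact hder (.raa h1 h2)
    have hsatΔ : ∀ γ ∈ Δ, (canonM Δ).sat γ := fun γ hγ => canonM_sat hcon (.prem hγ)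
    have hsatΓ : (canonM Δ).satSet Γ := fun γ hγ => hsatΔ γ (Set.mem_insert_of_mem _ hγ)
    have hφ : (canonM Δ).sat φ := hval _ hsatΓ
    exact ((canonM Δ).sat_negf φ).mp (hsatΔ _ (Set.mem_insert _ _)) hφ
end

section
/- The proof system S4_NES is sound with respect to the class of S4 models, and the proof system S5_NES is sound with respect to the class of S5 models: if Σ ⊢_{S4_NES} φ then every pointed S4 model satisfying Σ satisfies φ, and if Σ ⊢_{S5_NES} φ then every pointed S5 model satisfying Σ satisfies φ. -/
/-- Terms of the language L_NES: `g ::= A | K_i g | ¬g`. -/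
inductive NesTerm (U I : Type) : Type
  | base : U → NesTerm U I
  | know : I → NesTerm U I → NesTerm U I
  | neg  : NesTerm U I → NesTerm U I

/-- Formulas of L_NES: `All g1 are g2` and `Some g1 is g2`. -/
inductive NesForm (U I : Type) : Type
  | all : NesTerm U I → NesTerm U I → NesForm U I
  | ex  : NesTerm U I → NesTerm U I → NesForm U I

/-- The (defined) negation of an L_NES formula. -/
def NesForm.negf {U I : Type} : NesForm U I → NesForm U I
  | .all g1 g2 => .ex g1 (.neg g2)
  | .ex g1 g2 => .all g1 (.neg g2)

/-- Derivability in T_NES augmented with a set `extra` of additional axioms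
(`extra = ∅` gives T_NES itself). -/
inductive NesDer {U I : Type} (extra : Set (NesForm U I)) :
    Set (NesForm U I) → NesForm U I → Prop
  | prem {Γ φ} : φ ∈ Γ → NesDer extra Γ φ
  | extraAx {Γ φ} : φ ∈ extra → NesDer extra Γ φ
  | allSelf {Γ} (g : NesTerm U I) : NesDer extra Γ (.all g g)
  | tAx {Γ} (i : I) (g : NesTerm U I) : NesDer extra Γ (.all (.know i g) g)
  | dni {Γ} (g : NesTerm U I) : NesDer extra Γ (.all g (.neg (.neg g)))
  | dne {Γ} (g : NesTerm U I) : NesDer extra Γ (.all (.neg (.neg g)) g)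
  | barbara {Γ g1 g2 g3} : NesDer extra Γ (.all g1 g2) → NesDer extra Γ (.all g2 g3) →
      NesDer extra Γ (.all g1 g3)
  | conv {Γ g1 g2} : NesDer extra Γ (.ex g1 g2) → NesDer extra Γ (.ex g2 g1)
  | exist {Γ g1 g2} : NesDer extra Γ (.ex g1 g2) → NesDer extra Γ (.ex g1 g1)
  | nonEmpty {Γ g} : NesDer extra Γ (.all g (.neg g)) →
      NesDer extra Γ (.ex (.neg g) (.neg g))
  | raa {Γ φ ψ} : NesDer extra (insert φ Γ) ψ → NesDer extra (insert φ Γ) ψ.negf →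
      NesDer extra Γ φ.negf
  | kRule {Γ g1 g2} (i : I) : NesDer extra (∅ : Set (NesForm U I)) (.all g1 g2) →
      NesDer extra Γ (.all (.know i g1) (.know i g2))

/-- Derivability in the system T_NES. -/
def TNes {U I : Type} : Set (NesForm U I) → NesForm U I → Prop := NesDer ∅

/-- The extra axioms of S4_NES: `All K_i g are K_i K_i g`. -/
def S4Extra (U I : Type) : Set (NesForm U I) :=
  {φ | ∃ (i : I) (g : NesTerm U I), φ = .all (.know i g) (.know i (.know i g))}

/-- The extra axioms of S5_NES: those of S4_NES plus `All ¬K_i g are K_i ¬K_i g`. -/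
def S5Extra (U I : Type) : Set (NesForm U I) :=
  S4Extra U I ∪ {φ | ∃ (i : I) (g : NesTerm U I),
    φ = .all (.neg (.know i g)) (.know i (.neg (.know i g)))}

/-- Derivability in the system S4_NES. -/
def S4Nes {U I : Type} : Set (NesForm U I) → NesForm U I → Prop := NesDer (S4Extra U I)

/-- Derivability in the system S5_NES. -/
def S5Nes {U I : Type} : Set (NesForm U I) → NesForm U I → Prop := NesDer (S5Extra U I)

/-- A first-order Kripke model for L_NES with constant (nonempty) domain. -/
structure NesModel (U I : Type) where
  W : Type
  R : I → W → W → Prop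
  D : Type
  dNonempty : Nonempty D
  val : W → U → Set D

/-- Interpretation of terms: `ρ⁺_w(A) = ρ_w(A)`, `ρ⁺_w(¬g) = D − ρ⁺_w(g)`,
`ρ⁺_w(K_i g) = ⋂_{w R_i v} ρ⁺_v(g)`. -/
def NesModel.interp {U I : Type} (M : NesModel U I) : M.W → NesTerm U I → Set M.D
  | w, .base A => M.val w A
  | w, .know i g => {d | ∀ v, M.R i w v → d ∈ NesModel.interp M v g}
  | w, .neg g => (NesModel.interp M w g)ᶜ

/-- Satisfaction of L_NES formulas at a pointed model. -/
def NesModel.sat {U I : Type} (M : NesModel U I) (w : M.W) : NesForm U I → Prop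
  | .all g1 g2 => M.interp w g1 ⊆ M.interp w g2
  | .ex g1 g2 => (M.interp w g1 ∩ M.interp w g2).Nonempty

/-- A pointed model satisfies a set of formulas. -/
def NesModel.satSet {U I : Type} (M : NesModel U I) (w : M.W)
    (Γ : Set (NesForm U I)) : Prop :=
  ∀ φ ∈ Γ, M.sat w φ

/-- T models: every accessibility relation is reflexive. -/
def NesModel.IsT {U I : Type} (M : NesModel U I) : Prop := ∀ i, Reflexive (M.R i)

/-- S4 models: every accessibility relation is reflexive and transitive. -/
def NesModel.IsS4 {U I : Type} (M : NesModel U I) : Prop :=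
  ∀ i, Reflexive (M.R i) ∧ Transitive (M.R i)

/-- S5 models: every accessibility relation is an equivalence relation. -/
def NesModel.IsS5 {U I : Type} (M : NesModel U I) : Prop := ∀ i, Equivalence (M.R i)

lemma nes_sat_negf_iff {U I : Type} (M : NesModel U I) (w : M.W) (φ : NesForm U I) :
    M.sat w φ.negf ↔ ¬ M.sat w φ := by
  cases φ with
  | all g1 g2 =>
      simp [NesForm.negf, NesModel.sat, NesModel.interp, Set.inter_compl_nonempty_iff]
  | ex g1 g2 =>
      simp [NesForm.negf, NesModel.sat, NesModel.interp,
        Set.subset_compl_iff_disjoint_right, Set.not_nonempty_iff_eq_empty,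
        Set.disjoint_iff_inter_eq_empty]

lemma nes_sound {U I : Type} (extra : Set (NesForm U I)) (C : NesModel U I → Prop)
    (hC : ∀ M, C M → ∀ i, Reflexive (M.R i))
    (hE : ∀ (M : NesModel U I) (w : M.W), C M → ∀ φ ∈ extra, M.sat w φ) :
    ∀ (Γ : Set (NesForm U I)) (φ : NesForm U I), NesDer extra Γ φ →
      ∀ (M : NesModel U I) (w : M.W), C M → M.satSet w Γ → M.sat w φ := by
  intro Γ φ h
  induction h with
  | prem hmem => intro M w _ hΓ; exact hΓ _ hmem
  | extraAx hmem => intro M w hM _; exact hE M w hM _ hmem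
  | allSelf g => intro M w _ _; exact subset_rfl
  | tAx i g =>
      intro M w hM _ d hd
      exact hd w (hC M hM i w)
  | dni g =>
      intro M w _ _
      simp [NesModel.sat, NesModel.interp]
  | dne g =>
      intro M w _ _
      simp [NesModel.sat, NesModel.interp]
  | barbara _ _ ih1 ih2 =>
      intro M w hM hΓ
      exact (ih1 M w hM hΓ).trans (ih2 M w hM hΓ)
  | conv _ ih =>
      intro M w hM hΓ
      have := ih M w hM hΓ
      simpa [NesModel.sat, Set.inter_comm] using this
  | exist _ ih =>
      intro M w hM hΓ
      have h := ih M w hM hΓ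
      obtain ⟨d, hd, _⟩ := h
      exact ⟨d, hd, hd⟩
  | nonEmpty _ ih =>
      intro M w hM hΓ
      have h := ih M w hM hΓ
      obtain ⟨d⟩ := M.dNonempty
      refine ⟨d, ?_, ?_⟩ <;>
      · simp only [NesModel.interp, Set.mem_compl_iff]
        intro hd
        exact (h hd) hd
  | raa _ _ ih1 ih2 =>
      intro M w hM hΓ
      rw [nes_sat_negf_iff]
      intro hφ
      have hΓ' : M.satSet w _ := fun ψ' hψ' =>
        (Set.mem_insert_iff.mp hψ').elim (fun h => h ▸ hφ) (hΓ _)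
      exact (nes_sat_negf_iff M w _).mp (ih2 M w hM hΓ') (ih1 M w hM hΓ')
  | kRule i _ ih =>
      intro M w hM _ d hd v hv
      exact ih M v hM (fun ψ hψ => hψ.elim) (hd v hv)

/-- Soundness of S4_NES w.r.t. S4 models and of S5_NES w.r.t. S5 models. -/
theorem s4nes_s5nes_sound (U I : Type) [Countable U] :
    (∀ (Γ : Set (NesForm U I)) (φ : NesForm U I), S4Nes Γ φ →
      ∀ (M : NesModel U I) (w : M.W), M.IsS4 → M.satSet w Γ → M.sat w φ) ∧
    (∀ (Γ : Set (NesForm U I)) (φ : NesForm U I), S5Nes Γ φ →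
      ∀ (M : NesModel U I) (w : M.W), M.IsS5 → M.satSet w Γ → M.sat w φ) := by
  have h4ax : ∀ (M : NesModel U I) (w : M.W), (∀ i, Transitive (M.R i)) →
      ∀ φ ∈ S4Extra U I, M.sat w φ := by
    rintro M w hT φ ⟨i, g, rfl⟩
    intro d hd v hv u hu
    exact hd u (hT i hv hu)
  constructor
  · refine nes_sound _ NesModel.IsS4 (fun M hM i => (hM i).1) ?_
    intro M w hM φ hφ
    exact h4ax M w (fun i => (hM i).2) φ hφ
  · refine nes_sound _ NesModel.IsS5 (fun M hM i => (hM i).refl) ?_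
    intro M w hM φ hφ
    rcases hφ with hφ | ⟨i, g, rfl⟩
    · exact h4ax M w (fun i => fun _ _ _ h1 h2 => (hM i).trans h1 h2) φ hφ
    · -- All ¬K_i g are K_i ¬K_i g
      intro d hd v hv
      simp only [NesModel.interp, Set.mem_compl_iff, Set.mem_setOf_eq] at hd ⊢
      intro hdv
      apply hd
      intro u hu
      exact hdv u ((hM i).trans ((hM i).symm hv) hu)
end

section
/- The rule Contrapositive is derivable in T_NES: for all terms g1, g2 of L_NES, from the premise 'All g1 are g2' the formula 'All ¬g2 are ¬g1' is derivable in T_NES, i.e., {All g1 are g2} ⊢_{T_NES} All ¬g2 are ¬g1. -/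
/-- Contrapositive is derivable in T_NES:
{All g1 are g2} ⊢ All ¬g2 are ¬g1. -/
theorem contrapositive_derivable (U I : Type) [Countable U] (g1 g2 : NesTerm U I) :
    TNes ({NesForm.all g1 g2} : Set (NesForm U I))
      (NesForm.all (.neg g2) (.neg g1)) := by
  have h := NesDer.raa (extra := (∅ : Set (NesForm U I)))
    (Γ := ({NesForm.all g1 g2} : Set (NesForm U I)))
    (φ := NesForm.ex (.neg g2) g1) (ψ := NesForm.ex g1 (.neg g2))
    (NesDer.conv (NesDer.prem (Set.mem_insert _ _)))
    (NesDer.barbara (NesDer.prem (Set.mem_insert_of_mem _ rfl)) (NesDer.dni g2))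
  exact h
end

section
/- The rule NonExistence is derivable in T_NES: for all terms g and t of L_NES, from the premise 'All g are ¬g' the formula 'All t are ¬g' is derivable in T_NES, i.e., {All g are ¬g} ⊢_{T_NES} All t are ¬g. -/
/-- NonExistence is derivable in T_NES:
{All g are ¬g} ⊢ All t are ¬g. -/
theorem nonexistence_derivable (U I : Type) [Countable U] (g t : NesTerm U I) :
    TNes ({NesForm.all g (.neg g)} : Set (NesForm U I))
      (NesForm.all t (.neg g)) := by
  have h : TNes ({NesForm.all g (.neg g)} : Set (NesForm U I))
      (NesForm.ex t g).negf := by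
    apply NesDer.raa (ψ := NesForm.ex g g)
    · exact NesDer.exist (NesDer.conv (NesDer.prem (Set.mem_insert _ _)))
    · exact NesDer.prem (Set.mem_insert_of_mem _ rfl)
  exact h
end

section
/- A set Σ of L_NES-formulas is inconsistent in T_NES (i.e., derives both some formula and its negation) if and only if Σ ⊢_{T_NES} 'Some g is ¬g' for some term g. -/
/-- A set of L_NES formulas is inconsistent in T_NES if it derives both some
formula and its negation. -/
def Inconsistent {U I : Type} (Γ : Set (NesForm U I)) : Prop :=
  ∃ ψ : NesForm U I, TNes Γ ψ ∧ TNes Γ ψ.negf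

/-- Weakening: derivability is monotone in the premise set. -/
lemma NesDer.weaken {U I : Type} {extra : Set (NesForm U I)}
    {Γ Δ : Set (NesForm U I)} {φ : NesForm U I}
    (h : NesDer extra Γ φ) (hsub : Γ ⊆ Δ) : NesDer extra Δ φ := by
  induction h generalizing Δ with
  | prem hmem => exact .prem (hsub hmem)
  | extraAx hmem => exact .extraAx hmem
  | allSelf g => exact .allSelf g
  | tAx i g => exact .tAx i g
  | dni g => exact .dni g
  | dne g => exact .dne g
  | barbara _ _ ih1 ih2 => exact .barbara (ih1 hsub) (ih2 hsub)
  | conv _ ih => exact .conv (ih hsub)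
  | exist _ ih => exact .exist (ih hsub)
  | nonEmpty _ ih => exact .nonEmpty (ih hsub)
  | raa _ _ ih1 ih2 =>
      exact .raa (ih1 (Set.insert_subset_insert hsub))
        (ih2 (Set.insert_subset_insert hsub))
  | kRule i h _ => exact .kRule i h

/-- Σ is inconsistent iff Σ ⊢ Some g is ¬g for some term g. -/
theorem inconsistent_iff_some_g_neg_g (U I : Type) [Countable U]
    (Γ : Set (NesForm U I)) :
    Inconsistent Γ ↔ ∃ g : NesTerm U I, TNes Γ (NesForm.ex g (.neg g)) := by
  constructor
  · rintro ⟨ψ, h1, h2⟩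
    have key : ∀ g : NesTerm U I, TNes Γ (NesForm.ex g (.neg g)) := by
      intro g
      have w1 : TNes (insert (NesForm.all g g) Γ) ψ :=
        h1.weaken (Set.subset_insert _ _)
      have w2 : TNes (insert (NesForm.all g g) Γ) ψ.negf :=
        h2.weaken (Set.subset_insert _ _)
      exact NesDer.raa w1 w2
    cases ψ with
    | all g1 g2 => exact ⟨g1, key g1⟩
    | ex g1 g2 => exact ⟨g1, key g1⟩
  · rintro ⟨g, h⟩
    exact ⟨NesForm.ex g (.neg g), h, NesDer.dni g⟩
end

section
/- Witness Lemma for possible collections of terms: every possible set X₀ of L_NES-terms can be extended to a type, i.e., there exists a type X with X₀ ⊆ X. -/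
/-- A type: a set X of terms that respects provable Barbara, and contains exactly
one of g, ¬g for every term g. -/
def IsType {U I : Type} (X : Set (NesTerm U I)) : Prop :=
  (∀ g1 g2 : NesTerm U I, g1 ∈ X → TNes (∅ : Set (NesForm U I)) (.all g1 g2) → g2 ∈ X) ∧
  (∀ g : NesTerm U I, g ∈ X ∨ NesTerm.neg g ∈ X) ∧
  (∀ g : NesTerm U I, ¬ (g ∈ X ∧ NesTerm.neg g ∈ X))

/-- A possible collection of terms: no two members provably exclude each other. -/
def IsPossible {U I : Type} (Y : Set (NesTerm U I)) : Prop :=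
  ∀ g1 g2 : NesTerm U I, g1 ∈ Y → g2 ∈ Y →
    ¬ TNes (∅ : Set (NesForm U I)) (.all g1 (.neg g2))

section Aux

variable {U I : Type}

/-- Weakening for `NesDer`. -/
lemma nesDer_mono {extra : Set (NesForm U I)} {Γ Γ' : Set (NesForm U I)} {φ : NesForm U I}
    (h : NesDer extra Γ φ) (hs : Γ ⊆ Γ') : NesDer extra Γ' φ := by
  induction h generalizing Γ' with
  | prem hφ => exact .prem (hs hφ)
  | extraAx hφ => exact .extraAx hφ
  | allSelf g => exact .allSelf g
  | tAx i g => exact .tAx i g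
  | dni g => exact .dni g
  | dne g => exact .dne g
  | barbara _ _ ih1 ih2 => exact .barbara (ih1 hs) (ih2 hs)
  | conv _ ih => exact .conv (ih hs)
  | exist _ ih => exact .exist (ih hs)
  | nonEmpty _ ih => exact .nonEmpty (ih hs)
  | raa _ _ ih1 ih2 =>
      exact .raa (ih1 (Set.insert_subset_insert hs)) (ih2 (Set.insert_subset_insert hs))
  | kRule i h1 _ => exact .kRule i h1

/-- Contraposition, derived via RAA. -/
lemma tnes_contrap {g1 g2 : NesTerm U I}
    (h : TNes (∅ : Set (NesForm U I)) (.all g1 (.neg g2))) :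
    TNes (∅ : Set (NesForm U I)) (.all g2 (.neg g1)) := by
  have hraa := NesDer.raa (extra := (∅ : Set (NesForm U I))) (Γ := ∅)
    (φ := NesForm.ex g2 g1) (ψ := NesForm.ex g1 g2)
    (.conv (.prem (Set.mem_insert _ _)))
    (nesDer_mono h (Set.empty_subset _))
  exact hraa

/-- Satisfaction of the defined negation. -/
lemma sat_negf (M : NesModel U I) (w : M.W) (φ : NesForm U I) :
    M.sat w φ.negf ↔ ¬ M.sat w φ := by
  cases φ with
  | all g1 g2 =>
      simp only [NesForm.negf, NesModel.sat, NesModel.interp]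
      exact Set.inter_compl_nonempty_iff
  | ex g1 g2 =>
      simp only [NesForm.negf, NesModel.sat, NesModel.interp]
      rw [Set.subset_compl_iff_disjoint_right, Set.disjoint_iff_inter_eq_empty,
        ← Set.not_nonempty_iff_eq_empty]

/-- Soundness of `T_NES` with respect to T models. -/
lemma tnes_sound {Γ : Set (NesForm U I)} {φ : NesForm U I}
    (h : NesDer (∅ : Set (NesForm U I)) Γ φ) (M : NesModel U I) (hT : M.IsT) :
    ∀ w, M.satSet w Γ → M.sat w φ := by
  induction h with
  | prem hφ => exact fun w hw => hw _ hφ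
  | extraAx hφ => exact absurd hφ (Set.notMem_empty _)
  | allSelf g => exact fun w _ => subset_rfl
  | tAx i g => exact fun w _ d hd => hd w (hT i w)
  | dni g => intro w _; simp [NesModel.sat, NesModel.interp]
  | dne g => intro w _; simp [NesModel.sat, NesModel.interp]
  | barbara _ _ ih1 ih2 => exact fun w hw => (ih1 w hw).trans (ih2 w hw)
  | conv _ ih =>
      intro w hw
      have := ih w hw
      simpa [NesModel.sat, Set.inter_comm] using this
  | exist _ ih =>
      intro w hw
      obtain ⟨d, hd, -⟩ := ih w hw
      exact ⟨d, hd, hd⟩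
  | nonEmpty _ ih =>
      intro w hw
      have h1 := ih w hw
      obtain ⟨d⟩ := M.dNonempty
      refine ⟨d, ?_, ?_⟩ <;>
      · simp only [NesModel.interp, Set.mem_compl_iff]
        intro hd
        exact (h1 hd) hd
  | @raa Γ φ ψ _ _ ih1 ih2 =>
      intro w hw
      rw [sat_negf]
      intro hφ
      have hins : M.satSet w (insert φ Γ) := by
        intro χ hχ
        rcases hχ with rfl | hχ
        · exact hφ
        · exact hw _ hχ
      exact ((sat_negf M w ψ).mp (ih2 w hins)) (ih1 w hins)
  | @kRule Γ g1 g2 i _ ih =>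
      intro w _ d hd v hv
      exact ih v (fun χ hχ => absurd hχ (Set.notMem_empty _)) (hd v hv)

/-- A term and its negation cannot both be provably empty. -/
lemma tnes_consistent (g : NesTerm U I)
    (h1 : TNes (∅ : Set (NesForm U I)) (.all g (.neg g)))
    (h2 : TNes (∅ : Set (NesForm U I)) (.all (.neg g) (.neg (.neg g)))) : False := by
  let M : NesModel U I :=
    ⟨PUnit, fun _ _ _ => True, PUnit, ⟨PUnit.unit⟩, fun _ _ => Set.univ⟩
  have hT : M.IsT := fun i w => trivial
  have hs1 := tnes_sound h1 M hT PUnit.unit (fun χ hχ => absurd hχ (Set.notMem_empty _))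
  have hs2 := tnes_sound h2 M hT PUnit.unit (fun χ hχ => absurd hχ (Set.notMem_empty _))
  simp only [NesModel.sat, NesModel.interp] at hs1 hs2
  by_cases hd : PUnit.unit ∈ M.interp PUnit.unit g
  · exact hs1 hd hd
  · exact hs2 hd hd

end Aux

/-- Witness Lemma: every possible set of terms extends to a type. -/
theorem witness_lemma_possible (U I : Type) [Countable U]
    (X0 : Set (NesTerm U I)) (h : IsPossible X0) :
    ∃ X : Set (NesTerm U I), IsType X ∧ X0 ⊆ X := by
  classical
  -- Zorn's lemma on possible sets containing X0
  set S : Set (Set (NesTerm U I)) := {Y | IsPossible Y} with hS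
  have hchain : ∀ c ⊆ S, IsChain (· ⊆ ·) c → c.Nonempty →
      ∃ ub ∈ S, ∀ s ∈ c, s ⊆ ub := by
    intro c hcS hc _
    refine ⟨⋃₀ c, ?_, fun s hs => Set.subset_sUnion_of_mem hs⟩
    intro g1 g2 hg1 hg2 hder
    obtain ⟨Y1, hY1, hg1⟩ := hg1
    obtain ⟨Y2, hY2, hg2⟩ := hg2
    rcases eq_or_ne Y1 Y2 with rfl | hne
    · exact hcS hY1 g1 g2 hg1 hg2 hder
    · rcases hc hY1 hY2 hne with h12 | h21
      · exact hcS hY2 g1 g2 (h12 hg1) hg2 hder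
      · exact hcS hY1 g1 g2 hg1 (h21 hg2) hder
  obtain ⟨X, hX0X, hXmax⟩ := zorn_subset_nonempty S hchain X0 h
  have hXposs : IsPossible X := hXmax.prop
  -- maximality: adding anything new to X either breaks possibility or is already there
  have hadd : ∀ g : NesTerm U I, IsPossible (insert g X) → g ∈ X := by
    intro g hp
    have := hXmax.eq_of_subset (hp : insert g X ∈ S) (Set.subset_insert g X)
    rw [this]; exact Set.mem_insert g X
  -- analyze failure of possibility of insert g X
  have hfail : ∀ g : NesTerm U I, g ∉ X →
      (∃ a ∈ X, TNes (∅ : Set (NesForm U I)) (.all a (.neg g))) ∨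
      TNes (∅ : Set (NesForm U I)) (.all g (.neg g)) := by
    intro g hg
    by_contra hcon
    push_neg at hcon
    obtain ⟨h1, h2⟩ := hcon
    apply hg
    apply hadd
    intro a b ha hb hder
    rcases Set.mem_insert_iff.mp ha with ha' | ha'
    · rcases Set.mem_insert_iff.mp hb with hb' | hb'
      · rw [ha', hb'] at hder; exact h2 hder
      · -- All g ¬b with b ∈ X : contrapose to All b ¬g
        rw [ha'] at hder
        exact h1 b hb' (tnes_contrap hder)
    · rcases Set.mem_insert_iff.mp hb with hb' | hb'
      · rw [hb'] at hder
        exact h1 a ha' hder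
      · exact hXposs a b ha' hb' hder
  refine ⟨X, ⟨?_, ?_, ?_⟩, hX0X⟩
  · -- closure under provable All
    intro g1 g2 hg1 hder
    apply hadd
    intro a b ha hb hab
    rcases Set.mem_insert_iff.mp ha with ha' | ha'
    · rcases Set.mem_insert_iff.mp hb with hb' | hb'
      · -- All g2 ¬g2, so All g1 ¬g1
        rw [ha', hb'] at hab
        have h3 : TNes (∅ : Set (NesForm U I)) (.all g1 (.neg g2)) := .barbara hder hab
        have h4 : TNes (∅ : Set (NesForm U I)) (.all g1 (.neg g1)) :=
          .barbara hder (tnes_contrap h3)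
        exact hXposs g1 g1 hg1 hg1 h4
      · rw [ha'] at hab
        exact hXposs g1 b hg1 hb' (.barbara hder hab)
    · rcases Set.mem_insert_iff.mp hb with hb' | hb'
      · -- All a ¬g2 with a ∈ X
        rw [hb'] at hab
        exact hXposs g1 a hg1 ha' (.barbara hder (tnes_contrap hab))
      · exact hXposs a b ha' hb' hab
  · -- completeness: g ∈ X or ¬g ∈ X
    intro g
    by_contra hcon
    push_neg at hcon
    obtain ⟨hg, hng⟩ := hcon
    rcases hfail g hg with ⟨a, ha, hder⟩ | hder
    · rcases hfail _ hng with ⟨a', ha', hder'⟩ | hder'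
      · -- All a ¬g, All a' ¬¬g
        exact hXposs a a' ha ha' (.barbara hder (tnes_contrap hder'))
      · -- All a ¬g, All ¬g ¬¬g
        have h3 : TNes (∅ : Set (NesForm U I)) (.all a (.neg (.neg g))) :=
          .barbara hder hder'
        have h4 : TNes (∅ : Set (NesForm U I)) (.all a g) := .barbara h3 (.dne g)
        exact hXposs a a ha ha (.barbara h4 (tnes_contrap hder))
    · rcases hfail _ hng with ⟨a', ha', hder'⟩ | hder'
      · -- All g ¬g, All a' ¬¬g
        have h3 : TNes (∅ : Set (NesForm U I)) (.all a' g) := .barbara hder' (.dne g)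
        have h4 : TNes (∅ : Set (NesForm U I)) (.all a' (.neg g)) := .barbara h3 hder
        exact hXposs a' a' ha' ha' (.barbara h4 (tnes_contrap hder'))
      · exact tnes_consistent g hder hder'
  · -- consistency: not both g and ¬g
    rintro g ⟨hg, hng⟩
    exact hXposs (.neg g) g hng hg (.allSelf _)
end

section
/- Sets of consistent existential sentences are satisfiable: if Σ_Some is a set of existential L_NES-sentences (sentences of the form 'Some g1 is g2') such that for every φ ∈ Σ_Some it is not the case that ⊢_{T_NES} ¬φ, then Σ_Some is satisfiable in a pointed T model. -/
namespace NesAux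

attribute [local instance] Classical.propDecidable

variable {U I : Type}

/-- Theoremhood in `T_NES`. -/
def Thm (φ : NesForm U I) : Prop := NesDer (∅ : Set (NesForm U I)) ∅ φ

theorem weaken {extra Γ Γ' : Set (NesForm U I)} {φ : NesForm U I}
    (h : NesDer extra Γ φ) (hs : Γ ⊆ Γ') : NesDer extra Γ' φ := by
  induction h generalizing Γ' with
  | prem h => exact .prem (hs h)
  | extraAx h => exact .extraAx h
  | allSelf g => exact .allSelf g
  | tAx i g => exact .tAx i g
  | dni g => exact .dni g
  | dne g => exact .dne g
  | barbara _ _ ih1 ih2 => exact .barbara (ih1 hs) (ih2 hs)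
  | conv _ ih => exact .conv (ih hs)
  | exist _ ih => exact .exist (ih hs)
  | nonEmpty _ ih => exact .nonEmpty (ih hs)
  | raa _ _ ih1 ih2 =>
      exact .raa (ih1 (Set.insert_subset_insert hs)) (ih2 (Set.insert_subset_insert hs))
  | kRule i h => exact .kRule i h

theorem thm_contra {a b : NesTerm U I} (h : Thm (.all a b)) :
    Thm (.all (.neg b) (.neg a)) := by
  refine NesDer.raa (φ := .ex (.neg b) a) (ψ := .ex a (.neg b)) ?_ ?_
  · exact .conv (.prem (Set.mem_insert _ _))
  · exact .barbara (weaken h (Set.empty_subset _)) (.dni b)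

theorem thm_all_of_empty {a : NesTerm U I} (h : Thm (.all a (.neg a))) (c : NesTerm U I) :
    Thm (.all a c) := by
  have h1 : Thm (.all a (.neg (.neg c))) := by
    refine NesDer.raa (φ := .ex a (.neg c)) (ψ := .ex a a) ?_ ?_
    · exact .exist (.prem (Set.mem_insert _ _))
    · exact weaken h (Set.empty_subset _)
  exact .barbara h1 (.dne c)

theorem thm_incons_symm {a b : NesTerm U I} (h : Thm (.all a (.neg b))) :
    Thm (.all b (.neg a)) :=
  .barbara (.dni b) (thm_contra h)

theorem thm_know_neg {i : I} {g : NesTerm U I} :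
    Thm (.all (.know i (.neg g)) (.neg (.know i g))) :=
  .barbara (.tAx i (.neg g)) (thm_contra (.tAx i g))

theorem thm_know_incons {i : I} {a b : NesTerm U I} (h : Thm (.all a (.neg b))) :
    Thm (.all (.know i a) (.neg (.know i b))) :=
  .barbara (.kRule i h) thm_know_neg

/-! ### Soundness -/

theorem sat_negf (M : NesModel U I) (w : M.W) (φ : NesForm U I) :
    M.sat w φ.negf ↔ ¬ M.sat w φ := by
  cases φ with
  | all g1 g2 =>
      show (M.interp w g1 ∩ (M.interp w g2)ᶜ).Nonempty ↔ ¬ M.interp w g1 ⊆ M.interp w g2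
      exact Set.inter_compl_nonempty_iff
  | ex g1 g2 =>
      show M.interp w g1 ⊆ (M.interp w g2)ᶜ ↔ ¬ (M.interp w g1 ∩ M.interp w g2).Nonempty
      constructor
      · rintro h ⟨d, h1, h2⟩; exact h h1 h2
      · intro h d hd hdc; exact h ⟨d, hd, hdc⟩

theorem sound {Γ : Set (NesForm U I)} {φ : NesForm U I}
    (h : NesDer (∅ : Set (NesForm U I)) Γ φ) :
    ∀ (M : NesModel U I), M.IsT → ∀ w : M.W, (∀ ψ ∈ Γ, M.sat w ψ) → M.sat w φ := by
  induction h with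
  | prem hφ => exact fun M hM w hΓ => hΓ _ hφ
  | extraAx hφ => exact absurd hφ (Set.notMem_empty _)
  | allSelf g => exact fun M hM w hΓ d hd => hd
  | tAx i g => exact fun M hM w hΓ d hd => hd w (hM i w)
  | dni g => exact fun M hM w hΓ d hd hc => hc hd
  | dne g =>
      intro M hM w hΓ d hd
      by_contra hc
      exact hd hc
  | barbara _ _ ih1 ih2 =>
      exact fun M hM w hΓ d hd => ih2 M hM w hΓ (ih1 M hM w hΓ hd)
  | conv _ ih =>
      intro M hM w hΓ
      obtain ⟨d, h1, h2⟩ := ih M hM w hΓ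
      exact ⟨d, h2, h1⟩
  | exist _ ih =>
      intro M hM w hΓ
      obtain ⟨d, h1, _⟩ := ih M hM w hΓ
      exact ⟨d, h1, h1⟩
  | nonEmpty _ ih =>
      intro M hM w hΓ
      obtain ⟨d⟩ := M.dNonempty
      exact ⟨d, fun hd => ih M hM w hΓ hd hd, fun hd => ih M hM w hΓ hd hd⟩
  | @raa Γ φ ψ _ _ ih1 ih2 =>
      intro M hM w hΓ
      rw [sat_negf]
      intro hφ
      have hins : ∀ χ ∈ insert φ Γ, M.sat w χ := by
        intro χ hχ
        rcases hχ with rfl | hχ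
        · exact hφ
        · exact hΓ _ hχ
      exact (sat_negf M w ψ).mp (ih2 M hM w hins) (ih1 M hM w hins)
  | kRule i _ ih =>
      intro M hM w hΓ d hd v hv
      exact ih M hM v (fun χ hχ => absurd hχ (Set.notMem_empty _)) (hd v hv)

/-! ### A trivial Boolean countermodel: no term is provably self-inconsistent -/

def par : NesTerm U I → Bool
  | .base _ => false
  | .know _ g => par g
  | .neg g => !par g

def boolModel (x : NesTerm U I) : NesModel U I where
  W := PUnit
  R := fun _ _ _ => True
  D := PUnit
  dNonempty := ⟨⟨⟩⟩
  val := fun _ _ => {_d | par x = false}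

theorem boolModel_interp (x : NesTerm U I) (g : NesTerm U I) :
    ∀ (w d : PUnit), d ∈ (boolModel x).interp w g ↔ par g = par x := by
  induction g with
  | base A =>
      intro w d
      show (par x = false) ↔ (false = par x)
      cases hx : par x <;> simp
  | know i g ih =>
      intro w d
      show (∀ v : PUnit, True → d ∈ (boolModel x).interp v g) ↔ par g = par x
      constructor
      · intro h; exact (ih w d).mp (h w trivial)
      · intro h v _; exact (ih v d).mpr h
  | neg g ih =>
      intro w d
      show (¬ d ∈ (boolModel x).interp w g) ↔ ((!par g) = par x)
      rw [ih w d]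
      cases hg : par g <;> cases hx : par x <;> simp

theorem not_thm_self (x : NesTerm U I) : ¬ Thm (.all x (.neg x)) := by
  intro h
  have hsat := sound h (boolModel x) (fun i w => trivial) ⟨⟩
    (fun ψ hψ => absurd hψ (Set.notMem_empty _))
  have hd : (⟨⟩ : PUnit) ∈ (boolModel x).interp ⟨⟩ x :=
    (boolModel_interp x x ⟨⟩ ⟨⟩).mpr rfl
  exact hsat hd hd

/-! ### Maximal pairwise-consistent sets -/

def Incons (a b : NesTerm U I) : Prop := Thm (.all a (.neg b))

theorem incons_symm {a b : NesTerm U I} (h : Incons a b) : Incons b a := thm_incons_symm h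

def PC (T : Set (NesTerm U I)) : Prop := ∀ a ∈ T, ∀ b ∈ T, ¬ Incons a b

def MCSet (T : Set (NesTerm U I)) : Prop := PC T ∧ ∀ g, g ∈ T ∨ .neg g ∈ T

theorem lindenbaum {S : Set (NesTerm U I)} (hS : PC S) : ∃ T, S ⊆ T ∧ MCSet T := by
  have hch : ∀ c ⊆ {X : Set (NesTerm U I) | PC X}, IsChain (· ⊆ ·) c → c.Nonempty →
      ∃ ub ∈ {X : Set (NesTerm U I) | PC X}, ∀ s ∈ c, s ⊆ ub := by
    intro c hc hchain _
    refine ⟨⋃₀ c, ?_, fun s hs => Set.subset_sUnion_of_mem hs⟩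
    rintro a ⟨s, hs, has⟩ b ⟨t, ht, hbt⟩
    rcases hchain.total hs ht with hst | hts
    · exact (hc ht) a (hst has) b hbt
    · exact (hc hs) a has b (hts hbt)
  obtain ⟨T, hST, hmax⟩ := zorn_subset_nonempty {X : Set (NesTerm U I) | PC X} hch S hS
  have hpcT : PC T := hmax.1
  have step : ∀ c, c ∉ T → ∃ a ∈ T, Incons a c := by
    intro c hc
    by_contra hno
    push_neg at hno
    have hpc : PC (insert c T) := by
      intro a ha b hb hI
      rcases ha with rfl | ha <;> rcases hb with rfl | hb
      · exact not_thm_self _ hI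
      · exact hno b hb (incons_symm hI)
      · exact hno a ha hI
      · exact hpcT a ha b hb hI
    exact hc (hmax.2 hpc (Set.subset_insert c T) (Set.mem_insert c T))
  refine ⟨T, hST, hpcT, ?_⟩
  intro g
  by_contra hng
  push_neg at hng
  obtain ⟨a, haT, hag⟩ := step g hng.1
  obtain ⟨b, hbT, hbg⟩ := step (.neg g) hng.2
  have hb' : Thm (.all b g) := .barbara hbg (.dne g)
  exact hpcT a haT b hbT (.barbara hag (thm_contra hb'))

theorem mem_of_all {T : Set (NesTerm U I)} (hT : MCSet T) {a b : NesTerm U I}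
    (ha : a ∈ T) (h : Thm (.all a b)) : b ∈ T := by
  rcases hT.2 b with hb | hb
  · exact hb
  · exact absurd (NesDer.barbara h (.dni b)) (hT.1 a ha _ hb)

theorem not_mem_neg {T : Set (NesTerm U I)} (hT : MCSet T) {g : NesTerm U I}
    (hg : g ∈ T) (hng : .neg g ∈ T) : False :=
  hT.1 g hg _ hng (NesDer.dni g)

/-! ### The canonical relation and existence lemma -/

def Rc (i : I) (T T' : Set (NesTerm U I)) : Prop := ∀ g, .know i g ∈ T → g ∈ T'

theorem Rc_refl {T : Set (NesTerm U I)} (hT : MCSet T) (i : I) : Rc i T T :=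
  fun g hg => mem_of_all hT hg (.tAx i g)

theorem exists_succ {T : Set (NesTerm U I)} (hT : MCSet T) {i : I} {g : NesTerm U I}
    (hg : .know i g ∉ T) : ∃ T', MCSet T' ∧ Rc i T T' ∧ g ∉ T' := by
  have hpc : PC ({h | NesTerm.know i h ∈ T} ∪ {.neg g}) := by
    rintro a (ha | ha) b (hb | hb) hI
    · exact hT.1 _ ha _ hb (thm_know_incons hI)
    · rcases hb with rfl
      exact hg (mem_of_all hT ha (NesDer.kRule i (.barbara hI (.dne g))))
    · rcases ha with rfl
      exact hg (mem_of_all hT hb (NesDer.kRule i (.barbara (incons_symm hI) (.dne g))))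
    · rcases ha with rfl
      rcases hb with rfl
      exact not_thm_self _ hI
  obtain ⟨T', hsub, hT'⟩ := lindenbaum hpc
  refine ⟨T', hT', fun h hh => hsub (Or.inl hh), fun hgT' => ?_⟩
  exact not_mem_neg hT' hgT' (hsub (Or.inr rfl))

/-! ### The canonical model -/

abbrev MCS (U I : Type) := {T : Set (NesTerm U I) // MCSet T}

noncomputable def cf (S : MCS U I) : List (I × MCS U I) → MCS U I
  | [] => S
  | p :: xs =>
      let prev := cf S xs
      if Rc p.1 prev.1 p.2.1 then p.2 else prev

theorem cf_nil (S : MCS U I) : cf S ([] : List (I × MCS U I)) = S := rfl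

theorem cf_cons (S : MCS U I) (i : I) (p : MCS U I) (xs : List (I × MCS U I)) :
    cf S ((i, p) :: xs) = if Rc i (cf S xs).1 p.1 then p else cf S xs := rfl

noncomputable def canM (U I : Type) : NesModel U I where
  W := List (I × MCS U I)
  R := fun i xs ys => ys = xs ∨ ∃ p : MCS U I, ys = (i, p) :: xs
  D := Option (MCS U I)
  dNonempty := ⟨none⟩
  val := fun xs A => {d | ∃ S : MCS U I, d = some S ∧ NesTerm.base A ∈ (cf S xs).1}

theorem truth (g : NesTerm U I) :
    ∀ (xs : List (I × MCS U I)) (S : MCS U I),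
      (some S ∈ (canM U I).interp xs g) ↔ g ∈ (cf S xs).1 := by
  induction g with
  | base A =>
      intro xs S
      show (∃ S' : MCS U I, some S = some S' ∧ NesTerm.base A ∈ (cf S' xs).1) ↔ _
      constructor
      · rintro ⟨S', hS', h⟩
        obtain rfl : S = S' := by injection hS'
        exact h
      · intro h; exact ⟨S, rfl, h⟩
  | know i g ih =>
      intro xs S
      constructor
      · intro h
        by_contra hK
        obtain ⟨T', hT', hRc, hgT'⟩ := exists_succ (cf S xs).2 hK
        have hy : (canM U I).R i xs ((i, (⟨T', hT'⟩ : MCS U I)) :: xs) :=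
          Or.inr ⟨⟨T', hT'⟩, rfl⟩
        have h2 := h _ hy
        replace h2 := (ih _ S).mp h2
        rw [cf_cons, if_pos hRc] at h2
        exact hgT' h2
      · intro h ys hR
        refine (ih ys S).mpr ?_
        rcases hR with hys | ⟨p, rfl⟩
        · rw [hys]; exact mem_of_all (cf S xs).2 h (.tAx i g)
        · rw [cf_cons]
          by_cases hrc : Rc i (cf S xs).1 p.1
          · rw [if_pos hrc]; exact hrc g h
          · rw [if_neg hrc]; exact mem_of_all (cf S xs).2 h (.tAx i g)
  | neg g ih =>
      intro xs S
      show (¬ some S ∈ (canM U I).interp xs g) ↔ _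
      rw [ih]
      constructor
      · intro h
        rcases (cf S xs).2.2 g with hg | hg
        · exact absurd hg h
        · exact hg
      · intro h hg
        exact not_mem_neg (cf S xs).2 hg h

end NesAux

/-- Sets of consistent existential sentences are satisfiable in a pointed T model. -/
theorem consistent_existential_satisfiable (U I : Type) [Countable U]
    (Γ : Set (NesForm U I))
    (hex : ∀ φ ∈ Γ, ∃ g1 g2 : NesTerm U I, φ = NesForm.ex g1 g2)
    (hcon : ∀ φ ∈ Γ, ¬ TNes (∅ : Set (NesForm U I)) φ.negf) :
    ∃ (M : NesModel U I) (w : M.W), M.IsT ∧ M.satSet w Γ := by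
    classical
  refine ⟨NesAux.canM U I, [], fun i xs => Or.inl rfl, ?_⟩
  intro φ hφ
  obtain ⟨g1, g2, rfl⟩ := hex φ hφ
  have hni : ¬ NesAux.Incons g1 g2 := hcon _ hφ
  have hpc : NesAux.PC {g1, g2} := by
    rintro a ha b hb hI
    rcases ha with rfl | rfl <;> rcases hb with rfl | rfl
    · exact hni (NesAux.thm_all_of_empty hI (.neg g2))
    · exact hni hI
    · exact hni (NesAux.incons_symm hI)
    · exact hni (NesAux.incons_symm (NesAux.thm_all_of_empty hI (.neg g1)))
  obtain ⟨T, hsub, hT⟩ := NesAux.lindenbaum hpc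
  refine ⟨some ⟨T, hT⟩, ?_, ?_⟩
  · exact (NesAux.truth g1 [] ⟨T, hT⟩).mpr (hsub (Set.mem_insert _ _))
  · exact (NesAux.truth g2 [] ⟨T, hT⟩).mpr (hsub (Set.mem_insert_of_mem _ rfl))
end

section
/- Weak completeness of T_NES: for every L_NES-formula φ, if φ is valid over the class of T models (holds at every world of every T model), then ⊢_{T_NES} φ. -/
namespace NesCompleteness

variable {U I : Type}

/-! ### Modality words and the interleaving relation -/

/-- `Sub u v` : "u implies v" for modality words; entries `(true, i)` are boxes
`K_i`, entries `(false, i)` are diamonds `¬K_i¬`. -/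
inductive Sub : List (Bool × I) → List (Bool × I) → Prop
  | nil : Sub [] []
  | skipBox {u v} (i : I) : Sub u v → Sub ((true, i) :: u) v
  | skipDia {u v} (i : I) : Sub u v → Sub u ((false, i) :: v)
  | mtch {u v} (m : Bool × I) : Sub u v → Sub (m :: u) (m :: v)

theorem Sub.refl : ∀ u : List (Bool × I), Sub u u
  | [] => .nil
  | m :: u => .mtch m (Sub.refl u)

theorem Sub.drop_box_right : ∀ {a b : List (Bool × I)} {i : I},
    Sub a ((true, i) :: b) → Sub a b
  | _, _, _, .skipBox j h => .skipBox j (Sub.drop_box_right h)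
  | _, _, _, .mtch _ h => .skipBox _ h

theorem Sub.cons_lift {u v : List (Bool × I)}
    (H : ∀ {a : List (Bool × I)}, Sub a u → Sub a v) :
    ∀ {a : List (Bool × I)} {m : Bool × I}, Sub a (m :: u) → Sub a (m :: v)
  | _, _, .skipBox j h => .skipBox j (Sub.cons_lift H h)
  | _, _, .skipDia j h => .skipDia j (H h)
  | _, _, .mtch m h => .mtch m (H h)

theorem Sub.trans : ∀ {a b c : List (Bool × I)}, Sub a b → Sub b c → Sub a c
  | _, _, _, h1, .nil => h1
  | _, _, _, h1, .skipBox _ h2 => Sub.trans (h1.drop_box_right) h2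
  | _, _, _, h1, .skipDia i h2 => .skipDia i (Sub.trans h1 h2)
  | _, _, _, h1, .mtch _ h2 => Sub.cons_lift (fun h => Sub.trans h h2) h1

/-! ### Kripke evaluation of words -/

def keval {W : Type} (R : I → W → W → Prop) (b : W → Prop) : W → List (Bool × I) → Prop
  | w, [] => b w
  | w, (true, i) :: u => ∀ v, R i w v → keval R b v u
  | w, (false, i) :: u => ∃ v, R i w v ∧ keval R b v u

theorem keval_congr {W : Type} {R : I → W → W → Prop} {b b' : W → Prop}
    (hb : ∀ w, b w ↔ b' w) :
    ∀ (u : List (Bool × I)) (w : W), keval R b w u ↔ keval R b' w u := by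
  intro u
  induction u with
  | nil => exact hb
  | cons m u ih =>
    obtain ⟨bb, i⟩ := m
    cases bb <;> intro w <;> simp only [keval]
    · exact exists_congr fun v => and_congr_right fun _ => ih v
    · exact forall_congr' fun v => imp_congr_right fun _ => ih v

def dual : List (Bool × I) → List (Bool × I) := List.map fun m => (!m.1, m.2)

@[simp] theorem dual_nil : dual ([] : List (Bool × I)) = [] := rfl
@[simp] theorem dual_cons (m : Bool × I) (u : List (Bool × I)) :
    dual (m :: u) = (!m.1, m.2) :: dual u := rfl

theorem keval_dual {W : Type} {R : I → W → W → Prop} {b : W → Prop} :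
    ∀ (u : List (Bool × I)) (w : W),
      keval R b w (dual u) ↔ ¬ keval R (fun v => ¬ b v) w u := by
  intro u
  induction u with
  | nil => intro w; exact (not_not).symm
  | cons m u ih =>
    obtain ⟨bb, i⟩ := m
    cases bb <;> intro w <;>
      simp only [keval, dual_cons, Bool.not_true, Bool.not_false] <;> push_neg
    · exact forall_congr' fun v => imp_congr_right fun _ => ih v
    · exact exists_congr fun v => and_congr_right fun _ => ih v

/-! ### Sign, atom and word of a term -/

def tsign : NesTerm U I → Bool
  | .base _ => true
  | .know _ g => tsign g
  | .neg g => !tsign g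

def tatom : NesTerm U I → U
  | .base A => A
  | .know _ g => tatom g
  | .neg g => tatom g

def tword : NesTerm U I → List (Bool × I)
  | .base _ => []
  | .know i g => (true, i) :: tword g
  | .neg g => dual (tword g)

theorem interp_eq_keval (M : NesModel U I) (d : M.D) :
    ∀ (g : NesTerm U I) (w : M.W),
      d ∈ M.interp w g ↔
        keval M.R (fun v => d ∈ M.val v (tatom g) ↔ tsign g = true) w (tword g) := by
  intro g
  induction g with
  | base A =>
    intro w
    simp [NesModel.interp, tword, tatom, tsign, keval]
  | know i g ih =>
    intro w
    show (∀ v, M.R i w v → d ∈ M.interp v g) ↔ ∀ v, M.R i w v → keval _ _ v (tword g)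
    exact forall_congr' fun v => imp_congr_right fun _ => ih v
  | neg g ih =>
    intro w
    rw [show tword (NesTerm.neg g) = dual (tword g) from rfl, keval_dual]
    simp only [tatom, tsign]
    have hmem : d ∈ M.interp w (NesTerm.neg g) ↔ ¬ d ∈ M.interp w g := Iff.rfl
    rw [hmem, ih w]
    refine not_congr (keval_congr (fun v => ?_) _ _)
    cases hs : tsign g <;> simp


/-! ### The canonical T model over up-closed sets of words -/

def UpClosed (S : Set (List (Bool × I))) : Prop :=
  ∀ ⦃w w'⦄, w ∈ S → Sub w w' → w' ∈ S

def CW (I : Type) : Type := {S : Set (List (Bool × I)) // UpClosed S}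

def CR (i : I) (S T : CW I) : Prop :=
  (∀ z, ((true, i) :: z) ∈ S.1 → z ∈ T.1) ∧
  (∀ z, z ∈ T.1 → ((false, i) :: z) ∈ S.1)

theorem CR.refl (i : I) (S : CW I) : CR i S S :=
  ⟨fun z hz => S.2 hz (.skipBox i (Sub.refl z)),
   fun z hz => S.2 hz (.skipDia i (Sub.refl z))⟩

theorem truth : ∀ (u : List (Bool × I)) (S : CW I),
    keval CR (fun T : CW I => [] ∈ T.1) S u ↔ u ∈ S.1 := by
  intro u
  induction u with
  | nil => intro S; exact Iff.rfl
  | cons m u ih =>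
    obtain ⟨bb, i⟩ := m
    cases bb <;> intro S
    · -- diamond case
      show (∃ T, CR i S T ∧ keval CR _ T u) ↔ _
      constructor
      · rintro ⟨T, hRT, hk⟩
        exact hRT.2 u ((ih T).mp hk)
      · intro hS
        refine ⟨⟨{z | Sub u z ∨ ∃ z', ((true, i) :: z') ∈ S.1 ∧ Sub z' z}, ?_⟩,
          ⟨fun z hz => Or.inr ⟨z, hz, Sub.refl z⟩, ?_⟩,
          (ih _).mpr (Or.inl (Sub.refl u))⟩
        · rintro w w' (hw | ⟨z', h1, h2⟩) hs
          · exact Or.inl (hw.trans hs)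
          · exact Or.inr ⟨z', h1, h2.trans hs⟩
        · rintro z (hz | ⟨z', h1, h2⟩)
          · exact S.2 hS (.mtch _ hz)
          · exact S.2 h1 (.skipBox i (.skipDia i h2))
    · -- box case
      show (∀ T, CR i S T → keval CR _ T u) ↔ _
      constructor
      · intro H
        have hR : CR i S ⟨{z | ∃ z', ((true, i) :: z') ∈ S.1 ∧ Sub z' z},
            by rintro w w' ⟨z', h1, h2⟩ hs; exact ⟨z', h1, h2.trans hs⟩⟩ :=
          ⟨fun z hz => ⟨z, hz, Sub.refl z⟩,
           fun z hz => by
            obtain ⟨z', h1, h2⟩ := hz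
            exact S.2 h1 (.skipBox i (.skipDia i h2))⟩
        obtain ⟨z', h1, h2⟩ := (ih _).mp (H _ hR)
        exact S.2 h1 (.mtch _ h2)
      · intro hS T hRT
        exact (ih T).mpr (hRT.1 u hS)

def canM (U I : Type) (s : Bool) (A : U) : NesModel U I where
  W := CW I
  R := CR
  D := Unit
  dNonempty := ⟨()⟩
  val := fun S B => {_d : Unit | B = A ∧ (s = true ↔ [] ∈ S.1)}

/-! ### The one-world model -/

def oneM (U I : Type) (p : U → Prop) : NesModel U I where
  W := Unit
  R := fun _ _ _ => True
  D := Unit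
  dNonempty := ⟨()⟩
  val := fun _ B => {_d : Unit | p B}

theorem one_interp (p : U → Prop) : ∀ (g : NesTerm U I) (w : Unit),
    (() ∈ (oneM U I p).interp w g) ↔ (p (tatom g) ↔ tsign g = true) := by
  intro g
  induction g with
  | base A => intro w; show p A ↔ (p A ↔ true = true); simp
  | know i g ih =>
    intro w
    show (∀ v : Unit, True → () ∈ (oneM U I p).interp v g) ↔ _
    simp only [tatom, tsign]
    exact ⟨fun H => (ih ()).mp (H () trivial), fun hc v _ => (ih v).mpr hc⟩
  | neg g ih =>
    intro w
    have hmem : () ∈ (oneM U I p).interp w (NesTerm.neg g)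
        ↔ ¬ () ∈ (oneM U I p).interp w g := Iff.rfl
    rw [hmem, ih w]
    simp only [tatom, tsign]
    cases hs : tsign g <;> simp


/-! ### The derivability layer -/

/-- `DA g1 g2` : `All g1 are g2` is a theorem of T_NES. -/
def DA (g1 g2 : NesTerm U I) : Prop :=
  NesDer (∅ : Set (NesForm U I)) (∅ : Set (NesForm U I)) (.all g1 g2)

theorem derMono {extra Γ : Set (NesForm U I)} {φ : NesForm U I}
    (h : NesDer extra Γ φ) : ∀ {Γ' : Set (NesForm U I)}, Γ ⊆ Γ' → NesDer extra Γ' φ := by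
  induction h with
  | prem h => exact fun hs => .prem (hs h)
  | extraAx h => exact fun _ => .extraAx h
  | allSelf g => exact fun _ => .allSelf g
  | tAx i g => exact fun _ => .tAx i g
  | dni g => exact fun _ => .dni g
  | dne g => exact fun _ => .dne g
  | barbara _ _ ih1 ih2 => exact fun hs => .barbara (ih1 hs) (ih2 hs)
  | conv _ ih => exact fun hs => .conv (ih hs)
  | exist _ ih => exact fun hs => .exist (ih hs)
  | nonEmpty _ ih => exact fun hs => .nonEmpty (ih hs)
  | raa _ _ ih1 ih2 =>
      exact fun hs => .raa (ih1 (Set.insert_subset_insert hs))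
        (ih2 (Set.insert_subset_insert hs))
  | kRule i h _ => exact fun _ => .kRule i h

/-- Contraposition is derivable, via RAA. -/
theorem DA.contra {g1 g2 : NesTerm U I} (h : DA g1 g2) :
    DA (.neg g2) (.neg g1) := by
  have h1 : NesDer (∅ : Set (NesForm U I))
      (insert (NesForm.ex (.neg g2) g1) ∅) (NesForm.ex g1 (.neg g2)) :=
    .conv (.prem (Set.mem_insert _ _))
  have h2 : NesDer (∅ : Set (NesForm U I))
      (insert (NesForm.ex (.neg g2) g1) ∅) (NesForm.all g1 (.neg (.neg g2))) :=
    .barbara (derMono h (Set.empty_subset _)) (.dni g2)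
  exact NesDer.raa (φ := NesForm.ex (.neg g2) g1) h1 h2

theorem DA.diaIntro (i : I) (a : NesTerm U I) :
    DA a (.neg (.know i (.neg a))) :=
  .barbara (.dni a) (DA.contra (.tAx i (.neg a)))

/-- The canonical term of a word with a signed atom. -/
def realize : List (Bool × I) → Bool → U → NesTerm U I
  | [], true, A => .base A
  | [], false, A => .neg (.base A)
  | (true, i) :: u, b, A => .know i (realize u b A)
  | (false, i) :: u, b, A => .neg (.know i (.neg (realize u b A)))

theorem subder {A : U} {b : Bool} {u v : List (Bool × I)} (h : Sub u v) :
    DA (realize u b A) (realize v b A) := by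
  induction h with
  | nil => exact .allSelf _
  | skipBox i h ih => exact .barbara (.tAx i _) ih
  | skipDia i h ih => exact .barbara ih (DA.diaIntro i _)
  | mtch m h ih =>
    obtain ⟨bb, i⟩ := m
    cases bb
    · exact DA.contra (NesDer.kRule i (DA.contra ih))
    · exact NesDer.kRule i ih

theorem dual_realize (A : U) : ∀ (u : List (Bool × I)) (b : Bool),
    DA (.neg (realize u b A)) (realize (dual u) (!b) A) ∧
    DA (realize (dual u) (!b) A) (.neg (realize u b A)) := by
  intro u
  induction u with
  | nil =>
    intro b
    cases b
    · exact ⟨.dne _, .dni _⟩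
    · exact ⟨.allSelf _, .allSelf _⟩
  | cons m u ih =>
    obtain ⟨bb, i⟩ := m
    intro b
    obtain ⟨ih1, ih2⟩ := ih b
    cases bb
    · exact ⟨.barbara (.dne _) (NesDer.kRule i ih1),
        .barbara (NesDer.kRule i ih2) (.dni _)⟩
    · have e1 : DA (.neg (realize (dual u) (!b) A)) (realize u b A) :=
        .barbara (DA.contra ih1) (.dne _)
      have e2 : DA (realize u b A) (.neg (realize (dual u) (!b) A)) :=
        .barbara (.dni _) (DA.contra ih2)
      exact ⟨DA.contra (NesDer.kRule i e1), DA.contra (NesDer.kRule i e2)⟩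

theorem term_realize : ∀ g : NesTerm U I,
    DA g (realize (tword g) (tsign g) (tatom g)) ∧
    DA (realize (tword g) (tsign g) (tatom g)) g := by
  intro g
  induction g with
  | base A => exact ⟨.allSelf _, .allSelf _⟩
  | know i g ih => exact ⟨NesDer.kRule i ih.1, NesDer.kRule i ih.2⟩
  | neg g ih =>
    obtain ⟨dr1, dr2⟩ := dual_realize (tatom g) (tword g) (tsign g)
    exact ⟨.barbara (DA.contra ih.2) dr1, .barbara dr2 (DA.contra ih.1)⟩

end NesCompleteness

open NesCompleteness in
/-- Weak completeness of T_NES: every formula valid over T models is a theorem. -/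
theorem tnes_weak_completeness (U I : Type) [Countable U] (φ : NesForm U I)
    (h : ∀ (M : NesModel U I) (w : M.W), M.IsT → M.sat w φ) :
    TNes (∅ : Set (NesForm U I)) φ := by
  classical
  cases φ with
  | ex g1 g2 =>
    exfalso
    set p : U → Prop := fun _ => tsign g1 = false with hp
    have hT : (oneM U I p).IsT := fun i x => trivial
    have hs0 := h _ () hT
    simp only [NesModel.sat] at hs0
    have hs : ((oneM U I p).interp () g1 ∩ (oneM U I p).interp () g2).Nonempty := hs0
    obtain ⟨d, hd1, -⟩ := hs
    cases d
    have hthis := (one_interp p g1 ()).mp hd1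
    rw [hp] at hthis
    cases hsg : tsign g1 <;> rw [hsg] at hthis <;> simp at hthis
  | all g1 g2 =>
    by_cases hlit : tsign g1 = tsign g2 ∧ tatom g1 = tatom g2
    · obtain ⟨hsg, hag⟩ := hlit
      by_cases hsub : Sub (tword g1) (tword g2)
      · have d1 := (term_realize g1).1
        have d2 := (term_realize g2).2
        rw [← hsg, ← hag] at d2
        exact NesDer.barbara d1 (NesDer.barbara (subder hsub) d2)
      · exfalso
        have hup : UpClosed {w | Sub (tword g1) w} :=
          fun w w' hw hs => Sub.trans hw hs
        have hT : (canM U I (tsign g1) (tatom g1)).IsT := fun i S => CR.refl i S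
        have hsat0 := h _ (⟨{w | Sub (tword g1) w}, hup⟩ : CW I) hT
        simp only [NesModel.sat] at hsat0
        have hsat : (canM U I (tsign g1) (tatom g1)).interp ⟨_, hup⟩ g1 ⊆
            (canM U I (tsign g1) (tatom g1)).interp ⟨_, hup⟩ g2 := hsat0
        have hc1 : ∀ v : CW I,
            ((() ∈ (canM U I (tsign g1) (tatom g1)).val v (tatom g1)) ↔ tsign g1 = true)
              ↔ ([] ∈ v.1) := by
          intro v
          show ((tatom g1 = tatom g1 ∧ (tsign g1 = true ↔ [] ∈ v.1)) ↔ tsign g1 = true) ↔ _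
          cases hs1 : tsign g1 <;> simp [not_not]
        have hd1 : () ∈ (canM U I (tsign g1) (tatom g1)).interp ⟨_, hup⟩ g1 := by
          refine (interp_eq_keval (canM U I (tsign g1) (tatom g1)) () g1 _).mpr ?_
          exact (keval_congr hc1 _ _).mpr ((truth _ _).mpr (Sub.refl _))
        have hd2 := hsat hd1
        replace hd2 := (interp_eq_keval (canM U I (tsign g1) (tatom g1)) () g2 _).mp hd2
        have hc2 : ∀ v : CW I,
            ((() ∈ (canM U I (tsign g1) (tatom g1)).val v (tatom g2)) ↔ tsign g2 = true)
              ↔ ([] ∈ v.1) := by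
          intro v
          rw [← hag, ← hsg]
          exact hc1 v
        exact hsub ((truth _ _).mp ((keval_congr hc2 _ _).mp hd2))
    · exfalso
      set p : U → Prop := fun B =>
        (B = tatom g1 ∧ tsign g1 = true) ∨ (¬ B = tatom g1 ∧ ¬ tsign g2 = true) with hp
      have hT : (oneM U I p).IsT := fun i x => trivial
      have key0 := h _ () hT
      simp only [NesModel.sat] at key0
      have key : (oneM U I p).interp () g1 ⊆ (oneM U I p).interp () g2 := key0
      have hd1 : () ∈ (oneM U I p).interp () g1 :=
        (one_interp p g1 ()).mpr (by rw [hp]; simp)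
      have hd2 := (one_interp p g2 ()).mp (key hd1)
      rw [hp] at hd2
      by_cases hA : tatom g2 = tatom g1
      · have hsne : ¬ tsign g1 = tsign g2 := fun he => hlit ⟨he, hA.symm⟩
        rw [hA] at hd2
        cases h1 : tsign g1 <;> cases h2 : tsign g2 <;> simp_all
      · simp [hA] at hd2
end

section
/- Witness Lemma for Δ-possible collections: for every maximal consistent set Δ of L_NES-formulas (with respect to T_NES), every Δ-possible set X₀ of terms can be extended to a Δ-type, i.e., there exists a Δ-type X with X₀ ⊆ X. -/
/-- A set of L_NES formulas is consistent (in the system with extra axioms `extra`)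
if no formula and its negation are both derivable from it. -/
def ConsistentIn {U I : Type} (extra : Set (NesForm U I)) (Γ : Set (NesForm U I)) : Prop :=
  ¬ ∃ ψ : NesForm U I, NesDer extra Γ ψ ∧ NesDer extra Γ ψ.negf

/-- Consistency in T_NES. -/
def Consistent {U I : Type} (Γ : Set (NesForm U I)) : Prop :=
  ConsistentIn ∅ Γ

/-- A maximal consistent set (w.r.t. T_NES): consistent, and no proper superset
is consistent. -/
def IsMCS {U I : Type} (Δ : Set (NesForm U I)) : Prop :=
  Consistent Δ ∧ ∀ Γ : Set (NesForm U I), Δ ⊆ Γ → Consistent Γ → Γ = Δ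

/-- A Δ-type: a set X of terms that respects Barbara relative to Δ, and contains
exactly one of g, ¬g for every term g. -/
def IsDeltaType {U I : Type} (Δ : Set (NesForm U I)) (X : Set (NesTerm U I)) : Prop :=
  (∀ g1 g2 : NesTerm U I, g1 ∈ X → TNes Δ (.all g1 g2) → g2 ∈ X) ∧
  (∀ g : NesTerm U I, g ∈ X ∨ NesTerm.neg g ∈ X) ∧
  (∀ g : NesTerm U I, ¬ (g ∈ X ∧ NesTerm.neg g ∈ X))

/-- A Δ-possible collection of terms: any two of its members are jointly
exemplified according to Δ. -/
def DeltaPossible {U I : Type} (Δ : Set (NesForm U I)) (Y : Set (NesTerm U I)) : Prop :=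
  ∀ t1 t2 : NesTerm U I, t1 ∈ Y → t2 ∈ Y → TNes Δ (NesForm.ex t1 t2)


section Aux

variable {U I : Type}

lemma NesDer.mono {extra Γ Γ' : Set (NesForm U I)} {φ : NesForm U I}
    (h : NesDer extra Γ φ) (hs : Γ ⊆ Γ') : NesDer extra Γ' φ := by
  induction h generalizing Γ' with
  | prem h => exact .prem (hs h)
  | extraAx h => exact .extraAx h
  | allSelf g => exact .allSelf g
  | tAx i g => exact .tAx i g
  | dni g => exact .dni g
  | dne g => exact .dne g
  | barbara _ _ ih1 ih2 => exact .barbara (ih1 hs) (ih2 hs)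
  | conv _ ih => exact .conv (ih hs)
  | exist _ ih => exact .exist (ih hs)
  | nonEmpty _ ih => exact .nonEmpty (ih hs)
  | raa _ _ ih1 ih2 =>
      exact .raa (ih1 (Set.insert_subset_insert hs)) (ih2 (Set.insert_subset_insert hs))
  | kRule i h _ => exact .kRule i h

lemma nes_contrapose {e Γ : Set (NesForm U I)} {a b : NesTerm U I}
    (h : NesDer e Γ (.all a b)) : NesDer e Γ (.all (.neg b) (.neg a)) :=
  NesDer.raa (φ := .ex (.neg b) a) (ψ := .ex a (.neg b))
    (NesDer.conv (.prem (Set.mem_insert _ _)))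
    ((h.mono (Set.subset_insert _ _)).barbara (NesDer.dni b))

lemma nes_dariiDN {e Γ : Set (NesForm U I)} {a b c : NesTerm U I}
    (h1 : NesDer e Γ (.ex a b)) (h2 : NesDer e Γ (.all b c)) :
    NesDer e Γ (.ex a (.neg (.neg c))) :=
  NesDer.raa (φ := .all a (.neg c)) (ψ := .ex a b)
    (h1.mono (Set.subset_insert _ _))
    ((NesDer.prem (Set.mem_insert _ _)).barbara
      (nes_contrapose (h2.mono (Set.subset_insert _ _))))

lemma mcs_not_both {Δ : Set (NesForm U I)} (hΔ : IsMCS Δ) {φ : NesForm U I}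
    (h1 : TNes Δ φ) (h2 : TNes Δ φ.negf) : False :=
  hΔ.1 ⟨φ, h1, h2⟩

lemma mcs_complete {Δ : Set (NesForm U I)} (hΔ : IsMCS Δ) (φ : NesForm U I) :
    TNes Δ φ ∨ TNes Δ φ.negf := by
  by_contra hc
  push_neg at hc
  obtain ⟨h1, h2⟩ := hc
  by_cases hcons : Consistent (insert φ Δ)
  · have heq := hΔ.2 (insert φ Δ) (Set.subset_insert _ _) hcons
    exact h1 (NesDer.prem (heq ▸ Set.mem_insert _ _))
  · unfold Consistent ConsistentIn at hcons
    push_neg at hcons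
    obtain ⟨ψ, hψ1, hψ2⟩ := hcons
    exact h2 (NesDer.raa hψ1 hψ2)

lemma mcs_darii {Δ : Set (NesForm U I)} (hΔ : IsMCS Δ) {a b c : NesTerm U I}
    (h1 : TNes Δ (.ex a b)) (h2 : TNes Δ (.all b c)) : TNes Δ (.ex a c) := by
  have hdn := nes_dariiDN h1 h2
  rcases mcs_complete hΔ (.ex a c) with h | h
  · exact h
  · have h' : TNes Δ (.all a (.neg c)) := h
    have h'' : TNes Δ (.all a (.neg (.neg (.neg c)))) := h'.barbara (NesDer.dni _)
    exact (mcs_not_both hΔ hdn h'').elim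

lemma nes_not_possible_extract {Δ : Set (NesForm U I)} (hΔ : IsMCS Δ)
    {M : Set (NesTerm U I)} (hM : DeltaPossible Δ M) (g : NesTerm U I)
    (hno : ¬ DeltaPossible Δ (insert g M)) :
    (∃ t ∈ M, TNes Δ (.all t (.neg g))) ∨ TNes Δ (.all g (.neg g)) := by
  unfold DeltaPossible at hno
  push_neg at hno
  obtain ⟨t1, t2, h1, h2, hne⟩ := hno
  have key : ∀ t ∈ M, ¬ TNes Δ (.ex t g) →
      (∃ t ∈ M, TNes Δ (.all t (.neg g))) ∨ TNes Δ (.all g (.neg g)) := by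
    intro t ht hn
    exact Or.inl ⟨t, ht, (mcs_complete hΔ (.ex t g)).resolve_left hn⟩
  rcases h1 with rfl | h1 <;> rcases h2 with rfl | h2
  · exact Or.inr ((mcs_complete hΔ _).resolve_left hne)
  · exact key t2 h2 (fun hx => hne hx.conv)
  · exact key t1 h1 hne
  · exact absurd (hM t1 t2 h1 h2) hne

lemma nes_both_fail_false {Δ : Set (NesForm U I)} (hΔ : IsMCS Δ)
    {M : Set (NesTerm U I)} (hM : DeltaPossible Δ M) (g : NesTerm U I)
    (H1 : (∃ t ∈ M, TNes Δ (.all t (.neg g))) ∨ TNes Δ (.all g (.neg g)))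
    (H2 : (∃ s ∈ M, TNes Δ (.all s (.neg (.neg g)))) ∨
      TNes Δ (.all (.neg g) (.neg (.neg g)))) : False := by
  rcases H1 with ⟨t, ht, hT⟩ | hB <;> rcases H2 with ⟨s, hs, hS⟩ | hB'
  · have hsg : TNes Δ (.all s g) := hS.barbara (NesDer.dne g)
    have hex : TNes Δ (.ex t g) := mcs_darii hΔ (hM t s ht hs) hsg
    exact mcs_not_both hΔ hex hT
  · have htg : TNes Δ (.all t g) := (hT.barbara hB').barbara (NesDer.dne g)
    have hex : TNes Δ (.ex t g) := mcs_darii hΔ (hM t t ht ht) htg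
    exact mcs_not_both hΔ hex hT
  · have hsg : TNes Δ (.all s g) := hS.barbara (NesDer.dne g)
    have h1 : TNes Δ (.ex s g) := mcs_darii hΔ (hM s s hs hs) hsg
    have h2 : TNes Δ (.ex s (.neg g)) := mcs_darii hΔ h1 hB
    exact mcs_not_both hΔ h2 hS
  · have hng : TNes Δ (.all (.neg g) g) := hB'.barbara (NesDer.dne g)
    have hex : TNes Δ (.ex (.neg g) (.neg g)) := NesDer.nonEmpty hB
    have h1 : TNes Δ (.ex (.neg g) g) := mcs_darii hΔ hex hng
    have h2 : TNes Δ (.all (.neg g) (.neg g)) := hng.barbara hB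
    exact mcs_not_both hΔ h1 h2

end Aux

/-- Witness Lemma for Δ-possible collections: every Δ-possible set of terms
extends to a Δ-type. -/
theorem witness_lemma_delta_possible (U I : Type) [Countable U]
    (Δ : Set (NesForm U I)) (hΔ : IsMCS Δ)
    (X0 : Set (NesTerm U I)) (h : DeltaPossible Δ X0) :
    ∃ X : Set (NesTerm U I), IsDeltaType Δ X ∧ X0 ⊆ X := by
  classical
  set S : Set (Set (NesTerm U I)) := {Y | DeltaPossible Δ Y ∧ X0 ⊆ Y} with hS
  have hchain : ∀ c ⊆ S, IsChain (· ⊆ ·) c → c.Nonempty →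
      ∃ ub ∈ S, ∀ s ∈ c, s ⊆ ub := by
    intro c hcS hchain ⟨Y0, hY0⟩
    refine ⟨⋃₀ c, ⟨?_, (hcS hY0).2.trans (Set.subset_sUnion_of_mem hY0)⟩,
      fun s hs => Set.subset_sUnion_of_mem hs⟩
    intro t1 t2 h1 h2
    obtain ⟨Y1, hY1, ht1⟩ := h1
    obtain ⟨Y2, hY2, ht2⟩ := h2
    rcases hchain.total hY1 hY2 with hle | hle
    · exact (hcS hY2).1 t1 t2 (hle ht1) ht2
    · exact (hcS hY1).1 t1 t2 ht1 (hle ht2)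
  obtain ⟨M, hX0M, hMS, hmax⟩ := zorn_subset_nonempty S hchain X0 ⟨h, subset_rfl⟩
  have hMposs : DeltaPossible Δ M := hMS.1
  have hmem : ∀ g : NesTerm U I, DeltaPossible Δ (insert g M) → g ∈ M := by
    intro g hp
    have hin : insert g M ∈ S := ⟨hp, hMS.2.trans (Set.subset_insert _ _)⟩
    exact hmax hin (Set.subset_insert _ _) (Set.mem_insert _ _)
  refine ⟨M, ⟨?_, ?_, ?_⟩, hX0M⟩
  · -- closure under derivable All
    intro g1 g2 hg1 hall
    apply hmem
    intro t1 t2 h1 h2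
    rcases h1 with rfl | h1 <;> rcases h2 with rfl | h2
    · exact ((mcs_darii hΔ (hMposs g1 g1 hg1 hg1) hall).conv).exist
    · exact (mcs_darii hΔ (hMposs t2 g1 h2 hg1) hall).conv
    · exact mcs_darii hΔ (hMposs t1 g1 h1 hg1) hall
    · exact hMposs t1 t2 h1 h2
  · -- completeness of the type
    intro g
    by_cases hp : DeltaPossible Δ (insert g M)
    · exact Or.inl (hmem g hp)
    by_cases hp' : DeltaPossible Δ (insert (NesTerm.neg g) M)
    · exact Or.inr (hmem _ hp')
    exact absurd (nes_both_fail_false hΔ hMposs g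
      (nes_not_possible_extract hΔ hMposs g hp)
      (nes_not_possible_extract hΔ hMposs (NesTerm.neg g) hp')) (fun f => f)
  · -- no contradiction in the type
    rintro g ⟨hg, hng⟩
    have hex : TNes Δ (.ex g (.neg g)) := hMposs g (NesTerm.neg g) hg hng
    exact mcs_not_both hΔ hex (NesDer.dni g)
end

section
/- Truth Lemma for the canonical model of T_NES: for every world w of M* and every term g of L_NES, the extended interpretation satisfies ρ^{*+}_w(g) = {m ∈ ℕ | g ∈ w(m)}. -/
/-- Worlds of the canonical model for T_NES: pairs of an MCS Δ and a map from ℕ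
to Δ-types. We write `w.f n` for `w(n)`. -/
structure CanonW (U I : Type) where
  Δ : Set (NesForm U I)
  f : ℕ → Set (NesTerm U I)
  mcs : IsMCS Δ
  htype : ∀ n : ℕ, IsDeltaType Δ (f n)

/-- Accessibility in the canonical model for T_NES:
w R*_i w' iff K_i g ∈ w(n) implies g ∈ w'(n), for all n and g. -/
def RStar {U I : Type} (i : I) (w w' : CanonW U I) : Prop :=
  ∀ (n : ℕ) (g : NesTerm U I), NesTerm.know i g ∈ w.f n → g ∈ w'.f n

/-- The extended interpretation ρ^{*+} of terms in the canonical model of T_NES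
(with domain ℕ). -/
def interpStar {U I : Type} : CanonW U I → NesTerm U I → Set ℕ
  | w, .base A => {n | NesTerm.base A ∈ w.f n}
  | w, .know i g => {n | ∀ w' : CanonW U I, RStar i w w' → n ∈ interpStar w' g}
  | w, .neg g => (interpStar w g)ᶜ

/-!
The only difficult case is `K_i t ∉ w(n)`, where an `R*_i`-successor `w'` with `t ∉ w'(n)` has
to be built, and with it a new maximal consistent set. Take it to be the theory of a world of an
auxiliary model: the canonical model of the pure logic, whose worlds are sequences of types for
the order `Nle` of provable inclusions. That order is closed under `K_i` (unlike derivability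
from an arbitrary `Δ`), so successors in the auxiliary model come from a Lindenbaum argument on
the terms alone, which yields its own truth lemma. The theory of any world of a reflexive model
is maximal consistent by soundness, and reading off the terms true of each `m ∈ ℕ` gives types
for it; applied to a suitable successor in the auxiliary model, this produces `w'`.
-/

section CanonicalModel

variable {U I : Type}

/-- Provable inclusions `⊢ All a are b` (see `Nle.tNes`), generated without premises. -/
inductive Nle : NesTerm U I → NesTerm U I → Prop
  | refl (a) : Nle a a
  | trans {a b c} : Nle a b → Nle b c → Nle a c
  | t (i) (a) : Nle (.know i a) a
  | dni (a) : Nle a (.neg (.neg a))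
  | dne (a) : Nle (.neg (.neg a)) a
  | kmono (i) {a b} : Nle a b → Nle (.know i a) (.know i b)
  | contra {a b} : Nle a b → Nle (.neg b) (.neg a)

theorem Nle.tNes {a b : NesTerm U I} (h : Nle a b) (Γ : Set (NesForm U I)) :
    TNes Γ (.all a b) := by
  induction h generalizing Γ with
  | refl a => exact NesDer.allSelf a
  | trans _ _ ih₁ ih₂ => exact NesDer.barbara (ih₁ Γ) (ih₂ Γ)
  | t i a => exact NesDer.tAx i a
  | dni a => exact NesDer.dni a
  | dne a => exact NesDer.dne a
  | kmono i _ ih => exact NesDer.kRule i (ih ∅)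
  | @contra a b _ ih =>
      exact NesDer.raa (φ := .ex (.neg b) a) (ψ := .ex a (.neg b))
        (NesDer.conv (NesDer.prem (Set.mem_insert _ _))) (NesDer.barbara (ih _) (NesDer.dni b))

/-- Value of a term in the one-world model with a single individual, where every predicate has
truth value `b`. -/
def NesTerm.boolEval (b : Bool) : NesTerm U I → Bool
  | .base _ => b
  | .know _ g => g.boolEval b
  | .neg g => !g.boolEval b

theorem NesTerm.boolEval_not (b : Bool) (g : NesTerm U I) : g.boolEval (!b) = !g.boolEval b := by
  induction g with
  | base => rfl
  | know _ _ ih => exact ih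
  | neg _ ih => simp only [boolEval, ih]

theorem Nle.boolEval_le {a b : NesTerm U I} (h : Nle a b) (v : Bool) :
    a.boolEval v = true → b.boolEval v = true := by
  induction h with
  | refl => exact id
  | trans _ _ ih₁ ih₂ => exact ih₂ ∘ ih₁
  | kmono _ _ ih => exact ih
  | contra _ ih =>
      simp only [NesTerm.boolEval, Bool.not_eq_eq_eq_not, Bool.not_true]
      exact fun hb => Bool.eq_false_iff.2 fun ha => by simp [ih ha] at hb
  | _ => simp [NesTerm.boolEval]

theorem Nle.not_neg_le_self (t : NesTerm U I) : ¬ Nle (.neg t) t := by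
  intro h
  cases ht : t.boolEval true
  · simpa [NesTerm.boolEval, ht] using h.boolEval_le true
  · have hf : t.boolEval false = false := by simpa [ht] using t.boolEval_not true
    simpa [NesTerm.boolEval, hf] using h.boolEval_le false

structure IsNleType (X : Set (NesTerm U I)) : Prop where
  closed : ∀ a b, a ∈ X → Nle a b → b ∈ X
  mem_or_neg_mem : ∀ g, g ∈ X ∨ NesTerm.neg g ∈ X
  not_mem_and_neg_mem : ∀ g, ¬ (g ∈ X ∧ NesTerm.neg g ∈ X)

theorem IsNleType.neg_mem_iff {X : Set (NesTerm U I)} (hX : IsNleType X) (g : NesTerm U I) :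
    NesTerm.neg g ∈ X ↔ g ∉ X :=
  ⟨fun hn h => hX.not_mem_and_neg_mem g ⟨h, hn⟩, (hX.mem_or_neg_mem g).resolve_left⟩

theorem IsDeltaType.isNleType {Δ : Set (NesForm U I)} {X : Set (NesTerm U I)}
    (hX : IsDeltaType Δ X) : IsNleType X :=
  ⟨fun a b ha hab => hX.1 a b ha (hab.tNes Δ), hX.2.1, hX.2.2⟩

def IsNleConsistent (Y : Set (NesTerm U I)) : Prop :=
  ∀ a b, a ∈ Y → b ∈ Y → ¬ Nle a (.neg b)

theorem IsNleConsistent.upperClosure {Y : Set (NesTerm U I)} (hY : IsNleConsistent Y) :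
    IsNleConsistent {b | ∃ a ∈ Y, Nle a b} := by
  rintro _ _ ⟨a, ha, haa'⟩ ⟨b, hb, hbb'⟩ h
  exact hY a b ha hb (haa'.trans (h.trans hbb'.contra))

theorem isNleConsistent_sUnion {c : Set (Set (NesTerm U I))} (hc : IsChain (· ⊆ ·) c)
    (h : ∀ Y ∈ c, IsNleConsistent Y) : IsNleConsistent (⋃₀ c) := by
  rintro a b ⟨Y₁, hY₁, ha⟩ ⟨Y₂, hY₂, hb⟩
  rcases hc.total hY₁ hY₂ with h₁₂ | h₂₁
  · exact h Y₂ hY₂ a b (h₁₂ ha) hb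
  · exact h Y₁ hY₁ a b ha (h₂₁ hb)

theorem IsNleConsistent.insert {Y : Set (NesTerm U I)} {g : NesTerm U I} (hY : IsNleConsistent Y)
    (hclosed : ∀ a b, a ∈ Y → Nle a b → b ∈ Y) (hg : NesTerm.neg g ∉ Y)
    (hgg : ¬ Nle g (.neg g)) : IsNleConsistent (insert g Y) := by
  rintro a b (rfl | ha) (rfl | hb) hab
  · exact hgg hab
  · exact hg (hclosed _ _ hb ((Nle.dni b).trans hab.contra))
  · exact hg (hclosed _ _ ha hab)
  · exact hY a b ha hb hab

theorem IsNleConsistent.exists_isNleType_superset {S : Set (NesTerm U I)}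
    (hS : IsNleConsistent S) : ∃ X, IsNleType X ∧ S ⊆ X := by
  obtain ⟨M, hSM, hmax⟩ := zorn_subset_nonempty {Y | IsNleConsistent Y}
    (fun c hc hchain _ => ⟨⋃₀ c, isNleConsistent_sUnion hchain hc,
      fun _ => Set.subset_sUnion_of_mem⟩) S hS
  have hM : IsNleConsistent M := hmax.1
  have hclosed : ∀ a b, a ∈ M → Nle a b → b ∈ M := fun a b ha hab =>
    hmax.2 hM.upperClosure (fun x hx => ⟨x, hx, Nle.refl x⟩) ⟨a, ha, hab⟩
  refine ⟨M, ⟨hclosed, fun g => ?_, fun g ⟨hg, hng⟩ => hM g _ hg hng (Nle.dni g)⟩, hSM⟩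
  by_contra! ⟨hg, hng⟩
  have hnng : NesTerm.neg (NesTerm.neg g) ∉ M := fun h => hg (hclosed _ _ h (Nle.dne g))
  -- `insert (¬g) M` is not consistent by maximality, which forces `⊢ All ¬g are ¬¬g`
  have hle : Nle (.neg g) (.neg (.neg g)) := by
    by_contra h
    exact hng (hmax.2 (hM.insert hclosed hnng h) (Set.subset_insert _ _) (Set.mem_insert _ _))
  exact Nle.not_neg_le_self g (hle.trans (Nle.dne g))

theorem IsNleType.isNleConsistent_know {X : Set (NesTerm U I)} (hX : IsNleType X) (i : I) :
    IsNleConsistent {h | NesTerm.know i h ∈ X} := fun _ b ha hb hab =>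
  hX.not_mem_and_neg_mem b
    ⟨hX.closed _ _ hb (Nle.t i b), hX.closed _ _ ha ((Nle.kmono i hab).trans (Nle.t i _))⟩

theorem IsNleType.isNleConsistent_insert_neg_know {X : Set (NesTerm U I)} (hX : IsNleType X)
    {i : I} {t : NesTerm U I} (hK : NesTerm.know i t ∉ X) :
    IsNleConsistent (insert (.neg t) {h | NesTerm.know i h ∈ X}) :=
  (hX.isNleConsistent_know i).insert (fun _ _ ha hab => hX.closed _ _ ha (Nle.kmono i hab))
    (fun h => hK (hX.closed _ _ h (Nle.kmono i (Nle.dne t))))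
    (fun h => Nle.not_neg_le_self t (h.trans (Nle.dne t)))

theorem exists_isNleType_succ {F : ℕ → Set (NesTerm U I)} (hF : ∀ m, IsNleType (F m))
    {i : I} {t : NesTerm U I} {n : ℕ} (hK : NesTerm.know i t ∉ F n) :
    ∃ F' : ℕ → Set (NesTerm U I), (∀ m, IsNleType (F' m)) ∧
      (∀ m h, NesTerm.know i h ∈ F m → h ∈ F' m) ∧ t ∉ F' n := by
  have hseed : ∀ m, ∃ X, IsNleType X ∧ {h | NesTerm.know i h ∈ F m} ⊆ X ∧
      (m = n → NesTerm.neg t ∈ X) := by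
    intro m
    by_cases hm : m = n
    · subst hm
      obtain ⟨X, hX, hsub⟩ :=
        ((hF m).isNleConsistent_insert_neg_know hK).exists_isNleType_superset
      exact ⟨X, hX, (Set.subset_insert _ _).trans hsub, fun _ => hsub (Set.mem_insert _ _)⟩
    · obtain ⟨X, hX, hsub⟩ := ((hF m).isNleConsistent_know i).exists_isNleType_superset
      exact ⟨X, hX, hsub, fun h => absurd h hm⟩
  choose F' hF' hsub hneg using hseed
  exact ⟨F', hF', hsub, fun ht => (hF' n).not_mem_and_neg_mem t ⟨ht, hneg n rfl⟩⟩

namespace NesModel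

theorem sat_negf (M : NesModel U I) (w : M.W) (ψ : NesForm U I) :
    M.sat w ψ.negf ↔ ¬ M.sat w ψ := by
  cases ψ <;> simp [sat, NesForm.negf, interp, Set.Nonempty, Set.subset_def]

theorem sound {M : NesModel U I} (hM : M.IsT) {Γ : Set (NesForm U I)} {φ : NesForm U I}
    (h : TNes Γ φ) (w : M.W) (hw : M.satSet w Γ) : M.sat w φ := by
  induction h generalizing w with
  | prem h => exact hw _ h
  | extraAx h => exact absurd h (Set.notMem_empty _)
  | allSelf => exact subset_rfl
  | tAx i => exact fun _ hd => hd w (hM i w)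
  | dni => exact fun _ hd hnd => hnd hd
  | dne => exact fun _ hd => not_not.1 hd
  | barbara _ _ ih₁ ih₂ => exact (ih₁ w hw).trans (ih₂ w hw)
  | conv _ ih =>
      obtain ⟨d, h₁, h₂⟩ := ih w hw
      exact ⟨d, h₂, h₁⟩
  | exist _ ih =>
      obtain ⟨d, h₁, _⟩ := ih w hw
      exact ⟨d, h₁, h₁⟩
  | nonEmpty _ ih =>
      obtain ⟨d⟩ := M.dNonempty
      exact ⟨d, fun hd => ih w hw hd hd, fun hd => ih w hw hd hd⟩
  | @raa Γ φ ψ _ _ ih₁ ih₂ =>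
      refine (M.sat_negf w φ).2 fun hφ => ?_
      have hw' : M.satSet w (insert φ Γ) := Set.forall_mem_insert.2 ⟨hφ, hw⟩
      exact (M.sat_negf w ψ).1 (ih₂ w hw') (ih₁ w hw')
  | kRule i _ ih =>
      exact fun _ hd v hv => ih v (fun _ h => absurd h (Set.notMem_empty _)) (hd v hv)

def theory (M : NesModel U I) (w : M.W) : Set (NesForm U I) := {φ | M.sat w φ}

theorem isMCS_theory {M : NesModel U I} (hM : M.IsT) (w : M.W) : IsMCS (M.theory w) := by
  refine ⟨fun ⟨ψ, h₁, h₂⟩ => ?_, fun Γ hsub hΓ => ?_⟩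
  · exact (M.sat_negf w ψ).1 (sound hM h₂ w fun _ => id) (sound hM h₁ w fun _ => id)
  · refine Set.Subset.antisymm (fun φ hφ => ?_) hsub
    by_contra hn
    exact hΓ ⟨φ, NesDer.prem hφ, NesDer.prem (hsub ((M.sat_negf w φ).2 hn))⟩

end NesModel

def CanonW.ofModel {M : NesModel U I} (hM : M.IsT) (w : M.W) (e : ℕ → M.D) : CanonW U I where
  Δ := M.theory w
  f m := {g | e m ∈ M.interp w g}
  mcs := NesModel.isMCS_theory hM w
  htype _ :=
    ⟨fun _ _ hg h => NesModel.sound hM h w (fun _ => id) hg, fun _ => em _,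
      fun _ ⟨hg, hng⟩ => hng hg⟩

def nleModel (U I : Type) : NesModel U I where
  W := {F : ℕ → Set (NesTerm U I) // ∀ m, IsNleType (F m)}
  R i F F' := ∀ (n : ℕ) (h : NesTerm U I), NesTerm.know i h ∈ F.1 n → h ∈ F'.1 n
  D := ℕ
  dNonempty := ⟨0⟩
  val F A := {n | NesTerm.base A ∈ F.1 n}

theorem nleModel_isT : (nleModel U I).IsT :=
  fun i F n h hK => (F.2 n).closed _ _ hK (Nle.t i h)

theorem nleModel_interp (F : (nleModel U I).W) (g : NesTerm U I) :
    (nleModel U I).interp F g = {m | g ∈ F.1 m} := by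
  induction g generalizing F with
  | base A => rfl
  | neg t ih =>
      ext m
      rw [NesModel.interp, ih]
      exact ((F.2 m).neg_mem_iff t).symm
  | know i t ih =>
      ext n
      refine ⟨fun h => ?_, fun hK F' hR => (ih F').superset (hR n t hK)⟩
      by_contra hK
      obtain ⟨F', hF', hR, ht⟩ := exists_isNleType_succ F.2 hK
      exact ht ((ih ⟨F', hF'⟩).subset (h ⟨F', hF'⟩ hR))

theorem exists_rStar_not_mem {w : CanonW U I} {i : I} {t : NesTerm U I} {n : ℕ}
    (hK : NesTerm.know i t ∉ w.f n) : ∃ w' : CanonW U I, RStar i w w' ∧ t ∉ w'.f n := by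
  obtain ⟨F', hF', hR, ht⟩ :=
    exists_isNleType_succ (fun m => (w.htype m).isNleType) hK
  exact ⟨CanonW.ofModel nleModel_isT ⟨F', hF'⟩ id,
    fun m h hK => (nleModel_interp _ h).superset (hR m h hK),
    fun h => ht ((nleModel_interp _ t).subset h)⟩

end CanonicalModel

theorem truth_lemma_star_general (U I : Type)
    (w : CanonW U I) (g : NesTerm U I) :
    interpStar w g = {m : ℕ | g ∈ w.f m} := by
  induction g generalizing w with
  | base A => rfl
  | neg t ih =>
      ext m
      rw [interpStar, ih]
      exact ((w.htype m).isNleType.neg_mem_iff t).symm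
  | know i t ih =>
      ext n
      refine ⟨fun h => ?_, fun hK w' hR => (ih w').superset (hR n t hK)⟩
      by_contra hK
      obtain ⟨w', hR, ht⟩ := exists_rStar_not_mem hK
      exact ht ((ih w').subset (h w' hR))

/-- Truth Lemma for the canonical model of T_NES: ρ^{*+}_w(g) = {m | g ∈ w(m)}. -/
theorem truth_lemma_star (U I : Type) [Countable U]
    (w : CanonW U I) (g : NesTerm U I) :
    interpStar w g = {m : ℕ | g ∈ w.f m} :=
  truth_lemma_star_general U I w g
end
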